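/- arXiv:1204.6452 — 9 statements merged into one kernel-verified Lean document; each statement's English description precedes it below -/
import Mathlib

section
/- Let G be a simple graph on a vertex set of size p whose maximum degree is at most K, where K ≥ 1. Then for every integer m ≥ 1: (a) for any fixed vertex v, the number of vertex subsets S with v ∈ S, |S| = m, and the induced subgraph G[S] connected is at most (eK)^m; and (b) the total number of vertex subsets S with |S| = m and G[S] connected is at most p·(eK)^m, where e is Euler's number. -/
/-!
Grow a connected set `S ∋ v` one vertex at a time: each new vertex is the `j`-th neighbour
(`j < K`) of a vertex already reached. So `S` is the image, under "follow the word from `v`", of a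
prefix-closed set of `m` words over `Fin K`, i.e. a rooted subtree of the `K`-ary tree. Such a
subtree is determined by recording, for the node of lexicographic rank `i`, which children `a` it
has: an `(m - 1)`-subset of `range m × Fin K`. Hence at most
`C(mK, m - 1) ≤ (mK)^(m-1) / (m-1)! = K^(m-1) m^m / m! ≤ (eK)^m` such sets contain `v`; summing
over `v` gives the global bound.
-/

open SimpleGraph Finset
open scoped Nat

section PrefixClosed

variable {α : Type*}

def IsPrefixClosed (A : Finset (List α)) : Prop := ∀ l ∈ A, l.dropLast ∈ A

theorem IsPrefixClosed.nil_mem {A : Finset (List α)} (hA : IsPrefixClosed A) (hne : A.Nonempty) :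
    [] ∈ A := by
  obtain ⟨l, hl, hmin⟩ := A.exists_min_image List.length hne
  rcases eq_or_ne l [] with rfl | hl_ne
  · exact hl
  · have hshorter := hmin _ (hA l hl)
    rw [List.length_dropLast] at hshorter
    have := List.length_pos_iff.2 hl_ne
    omega

theorem IsPrefixClosed.insert_concat [DecidableEq α] {A : Finset (List α)} (hA : IsPrefixClosed A)
    {l : List α} (hl : l ∈ A) (a : α) : IsPrefixClosed (insert (l ++ [a]) A) := by
  intro x hx
  rcases mem_insert.1 hx with rfl | hx
  · rw [List.dropLast_concat]
    exact mem_insert_of_mem hl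
  · exact mem_insert_of_mem (hA x hx)

theorem List.lt_append_singleton [LinearOrder α] (l : List α) (a : α) : l < l ++ [a] := by
  simpa using List.Lex.append_left (· < ·) (List.Lex.nil (a := a) (l := [])) l

end PrefixClosed

section Rank

variable {β : Type*} [LinearOrder β] [DecidableLT β] (A : Finset β)

theorem Finset.card_filter_lt_strictMonoOn : StrictMonoOn (fun p => #{x ∈ A | x < p}) A := by
  intro p hp q _ hpq
  refine card_lt_card ((ssubset_iff_of_subset ?_).2 ⟨p, ?_, ?_⟩)
  · intro x
    simp only [mem_filter]
    exact fun hx => ⟨hx.1, hx.2.trans hpq⟩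
  · exact mem_filter.2 ⟨hp, hpq⟩
  · simp

theorem Finset.card_filter_lt_lt_card {p : β} (hp : p ∈ A) : #{x ∈ A | x < p} < #A :=
  card_lt_card (filter_ssubset.2 ⟨p, hp, lt_irrefl p⟩)

end Rank

section ChildCode

variable {α : Type*} [LinearOrder α] [Fintype α] {A B : Finset (List α)}

def childCode (A : Finset (List α)) : Finset (ℕ × α) :=
  {q ∈ A ×ˢ (univ : Finset α) | q.1 ++ [q.2] ∈ A}.image fun q => (#{x ∈ A | x < q.1}, q.2)

theorem card_childCode (hA : IsPrefixClosed A) (hne : A.Nonempty) : #(childCode A) = #A - 1 := by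
  have hchildren :
      ({q ∈ A ×ˢ (univ : Finset α) | q.1 ++ [q.2] ∈ A}.image fun q => q.1 ++ [q.2]) =
        A.erase [] := by
    ext l
    simp only [mem_image, mem_filter, mem_product, mem_univ, and_true, mem_erase, Prod.exists]
    constructor
    · rintro ⟨p, a, ⟨-, hpa⟩, rfl⟩
      exact ⟨by simp, hpa⟩
    · rintro ⟨hl, hlA⟩
      refine ⟨l.dropLast, l.getLast hl, ⟨hA l hlA, ?_⟩, ?_⟩ <;>
        rw [List.dropLast_append_getLast hl]
      exact hlA
  rw [childCode, card_image_of_injOn, ← card_erase_of_mem (hA.nil_mem hne), ← hchildren,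
    card_image_of_injective]
  · rintro ⟨p, a⟩ ⟨p', a'⟩ h
    obtain ⟨rfl, h⟩ := List.append_inj' h rfl
    simpa using h
  · rintro ⟨p, a⟩ hp ⟨p', a'⟩ hp' h
    simp only [coe_filter, mem_product, mem_univ, and_true, Set.mem_ofPred_eq, Prod.mk.injEq]
      at hp hp' h
    rw [(card_filter_lt_strictMonoOn A).injOn hp.1 hp'.1 h.1, h.2]

theorem childCode_subset : childCode A ⊆ range #A ×ˢ univ := by
  intro q hq
  simp only [childCode, mem_image, mem_filter, mem_product] at hq
  obtain ⟨p, ⟨⟨hp, -⟩, -⟩, rfl⟩ := hq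
  exact mem_product.2 ⟨mem_range.2 (card_filter_lt_lt_card A hp), mem_univ _⟩

theorem childCode_mem_powersetCard (hA : IsPrefixClosed A) (hne : A.Nonempty) :
    childCode A ∈ powersetCard (#A - 1) (range #A ×ˢ (univ : Finset α)) :=
  mem_powersetCard.2 ⟨childCode_subset, card_childCode hA hne⟩

theorem mem_of_childCode_eq (hA : IsPrefixClosed A) (hB : [] ∈ B) (h : childCode A = childCode B)
    {l : List α} (hl : l ∈ A) (hbelow : ∀ x < l, x ∈ A ↔ x ∈ B) : l ∈ B := by
  rcases l.eq_nil_or_concat with rfl | ⟨p, a, rfl⟩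
  · exact hB
  rw [List.concat_eq_append] at hl hbelow ⊢
  have hpA : p ∈ A := by simpa using hA _ hl
  have hp_lt := List.lt_append_singleton p a
  have hpB : p ∈ B := (hbelow p hp_lt).1 hpA
  have hrank : {x ∈ A | x < p} = {x ∈ B | x < p} := by
    ext x
    simp only [mem_filter]
    exact and_congr_left fun hxp => hbelow x (hxp.trans hp_lt)
  have hcode : (#{x ∈ A | x < p}, a) ∈ childCode A :=
    mem_image.2 ⟨(p, a), mem_filter.2 ⟨mem_product.2 ⟨hpA, mem_univ a⟩, hl⟩, rfl⟩
  rw [h, hrank] at hcode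
  obtain ⟨⟨p', a'⟩, hp', hrank'⟩ := mem_image.1 hcode
  simp only [mem_filter, mem_product, mem_univ, and_true, Prod.mk.injEq] at hp' hrank'
  obtain ⟨hrank', rfl⟩ := hrank'
  rw [← (card_filter_lt_strictMonoOn B).injOn hp'.1 hpB hrank']
  exact hp'.2

/-- The lexicographically least word on which `A` and `B` differ has its parent below it, where
`A` and `B` agree; so the parent has the same rank in both, and the code sees the child. -/
theorem childCode_injOn :
    Set.InjOn childCode {A : Finset (List α) | IsPrefixClosed A ∧ A.Nonempty} := by
  rintro A ⟨hA, hAne⟩ B ⟨hB, hBne⟩ h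
  by_contra hAB
  have hsd := symmDiff_nonempty.2 hAB
  have hbelow : ∀ x < (symmDiff A B).min' hsd, x ∈ A ↔ x ∈ B := fun x hx => by
    by_contra hx'
    exact (min'_le _ x (mem_symmDiff.2 (by tauto))).not_gt hx
  rcases mem_symmDiff.1 (min'_mem _ hsd) with ⟨hlA, hlB⟩ | ⟨hlB, hlA⟩
  · exact hlB (mem_of_childCode_eq hA (hB.nil_mem hBne) h hlA hbelow)
  · exact hlA
      (mem_of_childCode_eq hB (hA.nil_mem hAne) h.symm hlB fun x hx => (hbelow x hx).symm)

end ChildCode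

theorem Nat.cast_choose_mul_sub_one_le_exp_mul_pow {K : ℕ} (hK : 1 ≤ K) (m : ℕ) :
    ((m * K).choose (m - 1) : ℝ) ≤ (Real.exp 1 * K) ^ m := by
  rcases m with _ | n
  · simp
  have hK' : (1 : ℝ) ≤ K := by exact_mod_cast hK
  calc (((n + 1) * K).choose (n + 1 - 1) : ℝ)
      ≤ (((n + 1) * K : ℕ) : ℝ) ^ n / n ! := Nat.choose_le_pow_div n _
    _ = ((n + 1 : ℕ) : ℝ) ^ (n + 1) / (n + 1)! * K ^ n := by
        rw [Nat.factorial_succ]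
        push_cast
        rw [mul_pow, pow_succ]
        field_simp
    _ ≤ Real.exp (n + 1 : ℕ) * K ^ (n + 1) := by
        gcongr
        · exact Real.pow_div_factorial_le_exp _ (by positivity) _
        · omega
    _ = (Real.exp 1 * K) ^ (n + 1) := by rw [mul_pow, ← Real.exp_nat_mul, mul_one]

theorem Set.ncard_le_sum_ncard_mem {V : Type*} [Fintype V] {P : Finset V → Prop}
    (hP : ∀ S, P S → S.Nonempty) : {S | P S}.ncard ≤ ∑ v, {S | v ∈ S ∧ P S}.ncard := by
  have hunion : {S | P S} = ⋃ v, {S | v ∈ S ∧ P S} := by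
    ext S
    simp only [Set.mem_ofPred_eq, Set.mem_iUnion]
    exact ⟨fun h => (hP S h).imp fun v hv => ⟨hv, h⟩, fun ⟨_, _, h⟩ => h⟩
  rw [hunion]
  exact Set.ncard_iUnion_le_of_fintype _

namespace SimpleGraph

variable {V : Type*} (G : SimpleGraph V)

theorem exists_adj_of_ssubset_of_connected_induce {S T : Finset V}
    (hS : (G.induce (S : Set V)).Connected) (hTS : T ⊂ S) (hT : T.Nonempty) :
    ∃ w ∈ T, ∃ u ∈ S, u ∉ T ∧ G.Adj w u := by
  obtain ⟨t, ht⟩ := hT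
  obtain ⟨s, hs, hsT⟩ := exists_of_ssubset hTS
  obtain ⟨q⟩ := hS.preconnected ⟨t, hTS.subset ht⟩ ⟨s, hs⟩
  obtain ⟨d, -, hd₁, hd₂⟩ := q.exists_boundary_dart {x | x.1 ∈ T} ht hsT
  exact ⟨d.fst, hd₁, d.snd, d.snd.2, hd₂, d.adj⟩

theorem exists_neighbor_enumeration [G.LocallyFinite] {K : ℕ} (hdeg : ∀ w, G.degree w ≤ K) :
    ∃ step : V → Fin K → V, ∀ w u, G.Adj w u → ∃ j, step w j = u := by
  classical
  refine ⟨fun w j => (G.neighborFinset w).toList.getD j w, fun w u hwu => ?_⟩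
  have hu : u ∈ (G.neighborFinset w).toList := by simpa using hwu
  have hidx := List.idxOf_lt_length_iff.2 hu
  refine ⟨⟨_, hidx.trans_le ?_⟩, ?_⟩
  · simpa using hdeg w
  · simp only [List.getD_eq_getElem _ _ hidx, List.getElem_idxOf]

variable [DecidableEq V]

theorem exists_isPrefixClosed_image_foldl_eq {α : Type*} (step : V → α → V)
    (hstep : ∀ w u, G.Adj w u → ∃ a, step w a = u) {S : Finset V} {v : V} (hv : v ∈ S)
    (hS : (G.induce (S : Set V)).Connected) :
    ∃ A : Finset (List α), IsPrefixClosed A ∧ #A = #S ∧ A.image (·.foldl step v) = S := by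
  classical
  set follow : List α → V := (·.foldl step v)
  have grow : ∀ k, 1 ≤ k → k ≤ #S → ∃ A : Finset (List α),
      IsPrefixClosed A ∧ #A = k ∧ Set.InjOn follow A ∧ A.image follow ⊆ S := by
    intro k hk
    induction k, hk using Nat.le_induction with
    | base => exact fun _ => ⟨{[]}, by simp [IsPrefixClosed], rfl, by simp, by simpa [follow]⟩
    | succ k hk ih =>
      intro hkS
      obtain ⟨A, hA, hAk, hinj, hAS⟩ := ih (by omega)
      have hcard : #(A.image follow) = k := by rw [card_image_of_injOn hinj, hAk]
      have hssub : A.image follow ⊂ S := ssubset_of_subset_of_ne hAS (by rintro rfl; omega)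
      obtain ⟨w, hw, u, huS, hu, hwu⟩ := G.exists_adj_of_ssubset_of_connected_induce hS hssub
        (by rw [← card_pos]; omega)
      obtain ⟨l, hl, rfl⟩ := mem_image.1 hw
      obtain ⟨a, rfl⟩ := hstep _ _ hwu
      have hfollow : follow (l ++ [a]) = step (follow l) a := List.foldl_concat ..
      have hnew : l ++ [a] ∉ A := fun h => hu (hfollow ▸ mem_image_of_mem follow h)
      refine ⟨insert (l ++ [a]) A, hA.insert_concat hl a, by rw [card_insert_of_notMem hnew, hAk],
        ?_, ?_⟩
      · rw [coe_insert, Set.injOn_insert hnew]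
        exact ⟨hinj, by rwa [hfollow, ← coe_image]⟩
      · rw [image_insert, hfollow]
        exact insert_subset huS hAS
  obtain ⟨A, hA, hAS, hinj, hsub⟩ := grow #S (card_pos.2 ⟨v, hv⟩) le_rfl
  exact ⟨A, hA, hAS, eq_of_subset_of_card_le hsub (by rw [card_image_of_injOn hinj, hAS])⟩

theorem ncard_connected_induce_mem_le_choose [G.LocallyFinite] {K : ℕ}
    (hdeg : ∀ w, G.degree w ≤ K) (v : V) (m : ℕ) :
    {S : Finset V | v ∈ S ∧ #S = m ∧ (G.induce (S : Set V)).Connected}.ncard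
      ≤ (m * K).choose (m - 1) := by
  set conn := {S : Finset V | v ∈ S ∧ #S = m ∧ (G.induce (S : Set V)).Connected}
  obtain ⟨step, hstep⟩ := G.exists_neighbor_enumeration hdeg
  have hcode : ∀ S ∈ conn, ∃ A : Finset (List (Fin K)),
      IsPrefixClosed A ∧ #A = m ∧ A.image (·.foldl step v) = S :=
    fun S ⟨hv, hSm, hS⟩ => hSm ▸ G.exists_isPrefixClosed_image_foldl_eq step hstep hv hS
  choose! A hA using hcode
  have hAne : ∀ S ∈ conn, (A S).Nonempty := fun S hS =>
    image_nonempty.1 (by rw [(hA S hS).2.2]; exact ⟨v, hS.1⟩)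
  calc conn.ncard
      ≤ ((powersetCard (m - 1) (range m ×ˢ (univ : Finset (Fin K))) :
          Set (Finset (ℕ × Fin K)))).ncard := by
        refine Set.ncard_le_ncard_of_injOn (childCode ∘ A) (fun S hS => ?_)
          (fun S hS T hT hST => ?_)
        · obtain ⟨hpc, hcard, -⟩ := hA S hS
          rw [Function.comp_apply, mem_coe, ← hcard]
          exact childCode_mem_powersetCard hpc (hAne S hS)
        · obtain ⟨hpcS, -, himgS⟩ := hA S hS
          obtain ⟨hpcT, -, himgT⟩ := hA T hT
          rw [← himgS, ← himgT, childCode_injOn ⟨hpcS, hAne S hS⟩ ⟨hpcT, hAne T hT⟩ hST]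
    _ = (m * K).choose (m - 1) := by simp

end SimpleGraph

theorem connected_subgraph_count_of_bounded_degree_general
    (V : Type*) [Fintype V] [DecidableEq V] (p K : ℕ) (hK : 1 ≤ K)
    (hp : Fintype.card V = p) (G : SimpleGraph V) [DecidableRel G.Adj]
    (hdeg : ∀ v : V, G.degree v ≤ K) (m : ℕ) :
    (∀ v : V,
      (({S : Finset V | v ∈ S ∧ S.card = m ∧ (G.induce (S : Set V)).Connected}.ncard : ℝ)
        ≤ (Real.exp 1 * K) ^ m)) ∧
    (({S : Finset V | S.card = m ∧ (G.induce (S : Set V)).Connected}.ncard : ℝ)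
        ≤ p * (Real.exp 1 * K) ^ m) := by
  have hlocal : ∀ v : V,
      (({S : Finset V | v ∈ S ∧ S.card = m ∧ (G.induce (S : Set V)).Connected}.ncard : ℝ)
        ≤ (Real.exp 1 * K) ^ m) := fun v =>
    (Nat.cast_le.2 (G.ncard_connected_induce_mem_le_choose hdeg v m)).trans
      (Nat.cast_choose_mul_sub_one_le_exp_mul_pow hK m)
  refine ⟨hlocal, ?_⟩
  have hunion := Set.ncard_le_sum_ncard_mem (P := fun S : Finset V =>
    S.card = m ∧ (G.induce (S : Set V)).Connected) fun S hS =>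
      coe_nonempty.1 (Set.nonempty_coe_sort.1 hS.2.nonempty)
  calc ({S : Finset V | S.card = m ∧ (G.induce (S : Set V)).Connected}.ncard : ℝ)
      ≤ ∑ v, ({S : Finset V | v ∈ S ∧ S.card = m ∧
          (G.induce (S : Set V)).Connected}.ncard : ℝ) := by
        exact_mod_cast hunion
    _ ≤ ∑ _v : V, (Real.exp 1 * K) ^ m := sum_le_sum fun v _ => hlocal v
    _ = p * (Real.exp 1 * K) ^ m := by simp [hp]

/-- Let `G` be a simple graph on a vertex set of size `p` whose maximum
degree is at most `K`, where `K ≥ 1`. Then for every integer `m ≥ 1`: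
(a) for any fixed vertex `v`, the number of vertex subsets `S` with `v ∈ S`, `|S| = m`,
and induced subgraph `G[S]` connected is at most `(eK)^m`; and
(b) the total number of vertex subsets `S` with `|S| = m` and `G[S]` connected is at most
`p·(eK)^m`. -/
theorem connected_subgraph_count_of_bounded_degree
    (V : Type*) [Fintype V] [DecidableEq V] (p K : ℕ) (hK : 1 ≤ K)
    (hp : Fintype.card V = p) (G : SimpleGraph V) [DecidableRel G.Adj]
    (hdeg : ∀ v : V, G.degree v ≤ K) (m : ℕ) (hm : 1 ≤ m) :
    (∀ v : V,
      (({S : Finset V | v ∈ S ∧ S.card = m ∧ (G.induce (S : Set V)).Connected}.ncard : ℝ)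
        ≤ (Real.exp 1 * K) ^ m)) ∧
    (({S : Finset V | S.card = m ∧ (G.induce (S : Set V)).Connected}.ncard : ℝ)
        ≤ p * (Real.exp 1 * K) ^ m) :=
  connected_subgraph_count_of_bounded_degree_general V p K hK hp G hdeg m
end

section
/- Fix an integer K ≥ 1, a real ε ∈ (0,1), and an integer m₀ ≥ 1. Let G be a simple graph on the vertex set {1,…,p} whose maximum degree is at most K. Let b₁,…,b_p be independent Bernoulli(ε) random variables, and let S = {1 ≤ i ≤ p : b_i = 1}. Then the probability that the induced subgraph G[S] contains a connected vertex subset of size m₀ + 1 (equivalently, that G[S] has a connected component with more than m₀ vertices) is at most p·(e·ε·K)^{m₀+1}, where e is Euler's number. -/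
/-!
By the union bound, the probability is at most `ε ^ (m₀ + 1)` times the number of connected
vertex sets of size `m₀ + 1`, so it suffices to show that at most `((m - 1) * K).choose (m - 1)
≤ (e * K) ^ (m - 1)` connected sets of size `m` contain a given vertex `v`. Such a set `S` is
encoded by a greedy exploration from `v`: slot `k` stands for the `(k % K)`-th neighbour of the
`(k / K)`-th vertex found so far, the slots are scanned in increasing order, and a slot is taken
when it leads to a new vertex of `S`. Connectivity makes the exploration find all of `S`, the taken
slots form an `(m - 1)`-subset of `[0, (m - 1) * K)`, and replaying the scan with exactly those
slots rebuilds `S`.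
-/

open MeasureTheory Finset
open scoped Nat NNReal ENNReal

theorem Nat.choose_mul_le_exp_mul_pow (k K : ℕ) :
    ((k * K).choose k : ℝ) ≤ (Real.exp 1 * K) ^ k :=
  calc ((k * K).choose k : ℝ) ≤ ((k * K : ℕ) : ℝ) ^ k / k ! := Nat.choose_le_pow_div k _
    _ = (k : ℝ) ^ k / k ! * K ^ k := by push_cast; ring
    _ ≤ Real.exp k * K ^ k := by
      gcongr
      exact Real.pow_div_factorial_le_exp _ (by positivity) k
    _ = (Real.exp 1 * K) ^ k := by rw [mul_pow, ← Real.exp_nat_mul, mul_one]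

theorem MeasureTheory.bernoulli_pi_exists_forall_true_le {ι : Type*} [Fintype ι] (q : ℝ≥0)
    (hq : q ≤ 1) (𝒞 : Finset (Finset ι)) (n : ℕ) (h𝒞 : ∀ S ∈ 𝒞, #S = n) :
    Measure.pi (fun _ : ι => (PMF.bernoulli q hq).toMeasure)
        {b | ∃ S ∈ 𝒞, ∀ i ∈ S, b i = true} ≤ #𝒞 * (q : ℝ≥0∞) ^ n := by
  have hunion : {b : ι → Bool | ∃ S ∈ 𝒞, ∀ i ∈ S, b i = true}
      = ⋃ S ∈ 𝒞, (S : Set ι).pi fun _ => {true} := by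
    ext b; simp
  rw [hunion]
  calc _ ≤ ∑ S ∈ 𝒞, Measure.pi (fun _ : ι => (PMF.bernoulli q hq).toMeasure)
          ((S : Set ι).pi fun _ => {true}) := measure_biUnion_finset_le _ _
    _ = ∑ _S ∈ 𝒞, (q : ℝ≥0∞) ^ n := sum_congr rfl fun S hS => by
          rw [Measure.pi_pi_finset, PMF.toMeasure_apply_singleton _ _ (measurableSet_singleton _),
            prod_const, h𝒞 S hS, PMF.bernoulli_apply]
          rfl
    _ = #𝒞 * (q : ℝ≥0∞) ^ n := by rw [sum_const, nsmul_eq_mul]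

namespace SimpleGraph

variable {V : Type*} {G : SimpleGraph V}

theorem Connected.subset_of_forall_adj_mem {S T : Set V} (hS : (G.induce S).Connected)
    {v : V} (hvS : v ∈ S) (hvT : v ∈ T) (hT : ∀ x ∈ T, ∀ y ∈ S, G.Adj x y → y ∈ T) :
    S ⊆ T := by
  intro y hyS
  by_contra hyT
  obtain ⟨W⟩ := hS.preconnected ⟨v, hvS⟩ ⟨y, hyS⟩
  obtain ⟨d, -, hfst, hsnd⟩ := W.exists_boundary_dart {u : S | (u : V) ∈ T} hvT hyT
  exact hsnd (hT _ hfst _ d.snd.2 d.adj)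

variable [Fintype V] (G) [DecidableRel G.Adj]

/-- Defaults to `u` itself once `j ≥ G.degree u`. -/
noncomputable def nthNeighbor (u : V) (j : ℕ) : V := (G.neighborFinset u).toList.getD j u

theorem exists_lt_degree_nthNeighbor_eq {x y : V} (h : G.Adj x y) :
    ∃ j < G.degree x, G.nthNeighbor x j = y := by
  obtain ⟨j, hj, rfl⟩ :=
    List.mem_iff_getElem.mp (mem_toList.mpr ((G.mem_neighborFinset x y).mpr h))
  exact ⟨j, by simpa using hj, by simp [nthNeighbor, List.getElem?_eq_getElem hj]⟩

variable (K : ℕ) (v : V)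

noncomputable def slotTarget (L : List V) (k : ℕ) : V :=
  G.nthNeighbor (L.getD (k / K) v) (k % K)

section

open Classical

noncomputable def scanSlots (P : ℕ → List V → Prop) : ℕ → List V
  | 0 => [v]
  | n + 1 =>
    if P n (scanSlots P n) then scanSlots P n ++ [G.slotTarget K v (scanSlots P n) n]
    else scanSlots P n

variable (S : Finset V)

def IsFreeSlot (k : ℕ) (L : List V) : Prop :=
  k / K < L.length ∧ G.slotTarget K v L k ∈ S ∧ G.slotTarget K v L k ∉ L

noncomputable def explore : ℕ → List V := G.scanSlots K v (G.IsFreeSlot K v S)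

noncomputable def slotCode : Finset ℕ :=
  {k ∈ range (#S * K) | G.IsFreeSlot K v S k (G.explore K v S k)}

noncomputable def slotDecode (m : ℕ) (F : Finset ℕ) : Finset V :=
  (G.scanSlots K v (fun k _ => k ∈ F) (m * K)).toFinset

variable {G K v} {P Q : ℕ → List V → Prop}

theorem scanSlots_succ (n : ℕ) :
    G.scanSlots K v P (n + 1) = if P n (G.scanSlots K v P n)
      then G.scanSlots K v P n ++ [G.slotTarget K v (G.scanSlots K v P n) n]
      else G.scanSlots K v P n := by
  rw [scanSlots]

theorem scanSlots_prefix {m n : ℕ} (h : m ≤ n) :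
    G.scanSlots K v P m <+: G.scanSlots K v P n := by
  induction n, h using Nat.le_induction with
  | base => exact List.prefix_refl _
  | succ n _ ih =>
    rw [scanSlots_succ]
    split_ifs
    · exact ih.trans (List.prefix_append _ _)
    · exact ih

theorem length_scanSlots (n : ℕ) :
    (G.scanSlots K v P n).length = #{k ∈ range n | P k (G.scanSlots K v P k)} + 1 := by
  induction n with
  | zero => rfl
  | succ n ih =>
    rw [scanSlots_succ, range_add_one, filter_insert]
    split_ifs with h <;> simp [ih, h]

theorem scanSlots_congr {n : ℕ}
    (h : ∀ k < n, Q k (G.scanSlots K v P k) ↔ P k (G.scanSlots K v P k)) :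
    G.scanSlots K v Q n = G.scanSlots K v P n := by
  induction n with
  | zero => rfl
  | succ n ih =>
    rw [scanSlots_succ, scanSlots_succ, ih fun k hk => h k (by omega),
      if_congr (h n (by omega)) rfl rfl]

variable {S}

theorem explore_succ (n : ℕ) :
    G.explore K v S (n + 1) = if G.IsFreeSlot K v S n (G.explore K v S n)
      then G.explore K v S n ++ [G.slotTarget K v (G.explore K v S n) n]
      else G.explore K v S n :=
  scanSlots_succ n

theorem explore_prefix {m n : ℕ} (h : m ≤ n) : G.explore K v S m <+: G.explore K v S n :=
  scanSlots_prefix h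

theorem self_mem_explore (n : ℕ) : v ∈ G.explore K v S n :=
  (explore_prefix (Nat.zero_le n)).subset (List.mem_singleton_self v)

theorem explore_nodup (n : ℕ) : (G.explore K v S n).Nodup := by
  induction n with
  | zero => exact List.nodup_singleton v
  | succ n ih =>
    rw [explore_succ]
    split_ifs with h
    · exact ih.append (List.nodup_singleton _) (by simpa using h.2.2)
    · exact ih

theorem mem_of_mem_explore (hv : v ∈ S) {n : ℕ} {x : V} (hx : x ∈ G.explore K v S n) :
    x ∈ S := by
  induction n with
  | zero => rwa [List.mem_singleton.mp hx]
  | succ n ih =>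
    rw [explore_succ] at hx
    split_ifs at hx with h
    · rcases List.mem_append.mp hx with hx | hx
      · exact ih hx
      · rw [List.mem_singleton.mp hx]; exact h.2.1
    · exact ih hx

theorem length_explore_le (hv : v ∈ S) (n : ℕ) : (G.explore K v S n).length ≤ #S := by
  rw [← List.toFinset_card_of_nodup (explore_nodup n)]
  exact card_le_card fun x hx => mem_of_mem_explore hv (List.mem_toFinset.mp hx)

theorem explore_eq_of_length_mul_le (hK : 0 < K) {m n : ℕ}
    (h : (G.explore K v S m).length * K ≤ m) (hmn : m ≤ n) :
    G.explore K v S n = G.explore K v S m := by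
  induction n, hmn using Nat.le_induction with
  | base => rfl
  | succ n hmn ih =>
    rw [explore_succ, ih, if_neg]
    exact fun hfree => (hfree.1.trans_le ((Nat.le_div_iff_mul_le hK).mpr (h.trans hmn))).false

theorem lt_of_isFreeSlot (hK : 0 < K) (hv : v ∈ S) {k : ℕ}
    (hk : G.IsFreeSlot K v S k (G.explore K v S k)) : k < (#S - 1) * K := by
  have hlen := length_explore_le (G := G) (K := K) hv (k + 1)
  rw [explore_succ, if_pos hk, List.length_append, List.length_singleton] at hlen
  rw [← Nat.div_lt_iff_lt_mul hK]
  have := hk.1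
  omega

theorem slotTarget_mem_explore (hK : 0 < K) {k N : ℕ} (hkN : k < N)
    (hk : k / K < (G.explore K v S N).length)
    (hS : G.slotTarget K v (G.explore K v S N) k ∈ S) :
    G.slotTarget K v (G.explore K v S N) k ∈ G.explore K v S N := by
  have hprefix := explore_prefix (G := G) (K := K) (v := v) (S := S) hkN.le
  have hk' : k / K < (G.explore K v S k).length := by
    by_contra! hlen
    have hstall : (G.explore K v S k).length * K ≤ k :=
      (Nat.mul_le_mul_right K hlen).trans (Nat.div_mul_le_self k K)
    rw [explore_eq_of_length_mul_le hK hstall hkN.le] at hk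
    omega
  have htarget :
      G.slotTarget K v (G.explore K v S k) k = G.slotTarget K v (G.explore K v S N) k := by
    rw [slotTarget, slotTarget, List.getD_eq_getElem _ _ hk', List.getD_eq_getElem _ _ hk,
      hprefix.getElem hk']
  rw [← htarget] at hS ⊢
  by_cases hnew : G.slotTarget K v (G.explore K v S k) k ∈ G.explore K v S k
  · exact hprefix.subset hnew
  · refine (explore_prefix hkN).subset ?_
    rw [explore_succ, if_pos ⟨hk', hS, hnew⟩]
    exact List.mem_append_right _ (List.mem_singleton_self _)

theorem subset_toFinset_explore (hdeg : ∀ u, G.degree u ≤ K) (hv : v ∈ S)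
    (hS : (G.induce (S : Set V)).Connected) : S ⊆ (G.explore K v S (#S * K)).toFinset := by
  intro y hy
  refine List.mem_toFinset.mpr (hS.subset_of_forall_adj_mem
    (T := {x | x ∈ G.explore K v S (#S * K)}) hv (self_mem_explore _) ?_ hy)
  intro x hx y hyS hxy
  obtain ⟨i, hi, rfl⟩ := List.mem_iff_getElem.mp hx
  obtain ⟨j, hj, rfl⟩ := G.exists_lt_degree_nthNeighbor_eq hxy
  have hjK : j < K := hj.trans_le (hdeg _)
  have hdiv : (i * K + j) / K = i := by
    rw [Nat.add_comm, Nat.add_mul_div_right _ _ (by omega), Nat.div_eq_of_lt hjK, Nat.zero_add]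
  have hmod : (i * K + j) % K = j := by
    rw [Nat.add_comm, Nat.add_mul_mod_self_right, Nat.mod_eq_of_lt hjK]
  have htarget : G.slotTarget K v (G.explore K v S (#S * K)) (i * K + j)
      = G.nthNeighbor (G.explore K v S (#S * K))[i] j := by
    rw [slotTarget, hdiv, hmod, List.getD_eq_getElem _ _ hi]
  have hkN : i * K + j < #S * K := by
    have := length_explore_le (G := G) (K := K) hv (#S * K)
    calc i * K + j < (i + 1) * K := by rw [Nat.succ_mul]; omega
      _ ≤ #S * K := Nat.mul_le_mul_right K (by omega)
  rw [← htarget] at hyS ⊢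
  exact slotTarget_mem_explore (by omega) hkN (by rwa [hdiv]) hyS

theorem toFinset_explore (hdeg : ∀ u, G.degree u ≤ K) (hv : v ∈ S)
    (hS : (G.induce (S : Set V)).Connected) : (G.explore K v S (#S * K)).toFinset = S :=
  Subset.antisymm (fun _ hx => mem_of_mem_explore hv (List.mem_toFinset.mp hx))
    (subset_toFinset_explore hdeg hv hS)

theorem slotDecode_slotCode (hdeg : ∀ u, G.degree u ≤ K) (hv : v ∈ S)
    (hS : (G.induce (S : Set V)).Connected) : G.slotDecode K v #S (G.slotCode K v S) = S := by
  rw [slotDecode, scanSlots_congr (P := G.IsFreeSlot K v S) (Q := fun k _ => k ∈ G.slotCode K v S)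
    fun k hk => mem_filter.trans (and_iff_right (mem_range.mpr hk))]
  exact toFinset_explore hdeg hv hS

theorem card_slotCode (hdeg : ∀ u, G.degree u ≤ K) (hv : v ∈ S)
    (hS : (G.induce (S : Set V)).Connected) : #(G.slotCode K v S) = #S - 1 := by
  have hlen : (G.explore K v S (#S * K)).length = #(G.slotCode K v S) + 1 := length_scanSlots _
  rw [← List.toFinset_card_of_nodup (explore_nodup _), toFinset_explore hdeg hv hS] at hlen
  omega

theorem slotCode_subset_range (hK : 0 < K) (hv : v ∈ S) :
    G.slotCode K v S ⊆ range ((#S - 1) * K) :=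
  fun _ hk => mem_range.mpr (lt_of_isFreeSlot hK hv (mem_filter.mp hk).2)

variable (G K) in
theorem card_connected_finsets_containing_le (hK : 0 < K) (hdeg : ∀ u, G.degree u ≤ K) (v : V)
    (m : ℕ) :
    #{S : Finset V | v ∈ S ∧ #S = m ∧ (G.induce (S : Set V)).Connected}
      ≤ ((m - 1) * K).choose (m - 1) := by
  calc _ ≤ #((range ((m - 1) * K)).powersetCard (m - 1)) := by
        refine card_le_card_of_injOn (G.slotCode K v) ?_ ?_
        · rintro S hS
          obtain ⟨hv, rfl, hconn⟩ := (mem_filter.mp hS).2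
          exact mem_powersetCard.mpr ⟨slotCode_subset_range hK hv, card_slotCode hdeg hv hconn⟩
        · rintro S hS S' hS' hcode
          obtain ⟨hv, hm, hconn⟩ := (mem_filter.mp hS).2
          obtain ⟨hv', hm', hconn'⟩ := (mem_filter.mp hS').2
          rw [← slotDecode_slotCode hdeg hv hconn, ← slotDecode_slotCode hdeg hv' hconn', hcode,
            hm, hm']
    _ = ((m - 1) * K).choose (m - 1) := by rw [card_powersetCard, card_range]

variable (G K) in
theorem card_connected_finsets_le (hK : 0 < K) (hdeg : ∀ u, G.degree u ≤ K) (m : ℕ) :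
    #{S : Finset V | #S = m + 1 ∧ (G.induce (S : Set V)).Connected}
      ≤ Fintype.card V * (m * K).choose m := by
  calc _ ≤ #(univ.biUnion fun v : V =>
          {S : Finset V | v ∈ S ∧ #S = m + 1 ∧ (G.induce (S : Set V)).Connected}) := by
        refine card_le_card fun S hS => ?_
        obtain ⟨hcard, hS⟩ := (mem_filter.mp hS).2
        obtain ⟨v, hv⟩ := (card_pos (s := S)).mp (by omega)
        exact mem_biUnion.mpr ⟨v, mem_univ v, mem_filter.mpr ⟨mem_univ S, hv, hcard, hS⟩⟩
    _ ≤ Fintype.card V * (m * K).choose m :=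
        card_biUnion_le_card_mul _ _ _ fun v _ =>
          card_connected_finsets_containing_le G K hK hdeg v (m + 1)

end

open Classical in
theorem card_connected_finsets_le_exp_mul_pow (hK : 1 ≤ K) (hdeg : ∀ u, G.degree u ≤ K)
    (m : ℕ) :
    (#{S : Finset V | #S = m + 1 ∧ (G.induce (S : Set V)).Connected} : ℝ)
      ≤ Fintype.card V * (Real.exp 1 * K) ^ (m + 1) := by
  have heK : 1 ≤ Real.exp 1 * K :=
    one_le_mul_of_one_le_of_one_le (Real.one_le_exp zero_le_one) (by exact_mod_cast hK)
  calc _ ≤ (Fintype.card V * (m * K).choose m : ℝ) := by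
        exact_mod_cast G.card_connected_finsets_le K hK hdeg m
    _ ≤ Fintype.card V * (Real.exp 1 * K) ^ (m + 1) := by
        gcongr
        exact (Nat.choose_mul_le_exp_mul_pow m K).trans (pow_le_pow_right₀ heK m.le_succ)

end SimpleGraph

theorem bernoulli_signal_graphlet_size_bound_general
    (p K m₀ : ℕ) (hK : 1 ≤ K) (ε : ℝ) (hε0 : 0 < ε) (hε1 : ε < 1)
    (G : SimpleGraph (Fin p)) [DecidableRel G.Adj] (hdeg : ∀ v, G.degree v ≤ K) :
    (Measure.pi fun _ : Fin p =>
        (PMF.bernoulli (Real.toNNReal ε) (Real.toNNReal_le_one.mpr hε1.le)).toMeasure)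
      {b : Fin p → Bool | ∃ S : Finset (Fin p), (∀ i ∈ S, b i = true) ∧
        S.card = m₀ + 1 ∧ (G.induce (S : Set (Fin p))).Connected}
      ≤ ENNReal.ofReal (p * (Real.exp 1 * ε * K) ^ (m₀ + 1)) := by
  classical
  set 𝒞 : Finset (Finset (Fin p)) :=
    {S | #S = m₀ + 1 ∧ (G.induce (S : Set (Fin p))).Connected}
  have hevent : {b : Fin p → Bool | ∃ S : Finset (Fin p), (∀ i ∈ S, b i = true) ∧
      #S = m₀ + 1 ∧ (G.induce (S : Set (Fin p))).Connected}
      = {b | ∃ S ∈ 𝒞, ∀ i ∈ S, b i = true} := by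
    ext b; simp [𝒞, and_comm]
  have hcount : (#𝒞 : ℝ) ≤ p * (Real.exp 1 * K) ^ (m₀ + 1) := by
    simpa using G.card_connected_finsets_le_exp_mul_pow K hK hdeg m₀
  rw [hevent]
  refine (bernoulli_pi_exists_forall_true_le _ _ 𝒞 (m₀ + 1)
    fun S hS => (mem_filter.mp hS).2.1).trans ?_
  calc (#𝒞 : ℝ≥0∞) * (ε.toNNReal : ℝ≥0∞) ^ (m₀ + 1)
    _ = ENNReal.ofReal (#𝒞 * ε ^ (m₀ + 1)) := by
        rw [ENNReal.ofReal_mul (by positivity), ENNReal.ofReal_natCast, ENNReal.ofReal_pow hε0.le]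
        rfl
    _ ≤ ENNReal.ofReal (p * (Real.exp 1 * ε * K) ^ (m₀ + 1)) := by
        refine ENNReal.ofReal_le_ofReal ?_
        rw [mul_right_comm, mul_pow, ← mul_assoc]
        gcongr

/-- Fix an integer `K ≥ 1`, a real `ε ∈ (0,1)`, and an integer `m₀ ≥ 1`.
Let `G` be a simple graph on `{1,…,p}` whose maximum degree is at most `K`.
Let `b₁,…,b_p` be independent Bernoulli(ε) random variables and `S = {i : b_i = 1}`.
Then the probability that the induced subgraph `G[S]` contains a connected vertex subset of
size `m₀ + 1` is at most `p·(e·ε·K)^{m₀+1}`. -/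
theorem bernoulli_signal_graphlet_size_bound
    (p K m₀ : ℕ) (hK : 1 ≤ K) (hm : 1 ≤ m₀) (ε : ℝ) (hε0 : 0 < ε) (hε1 : ε < 1)
    (G : SimpleGraph (Fin p)) [DecidableRel G.Adj] (hdeg : ∀ v, G.degree v ≤ K) :
    (Measure.pi fun _ : Fin p =>
        (PMF.bernoulli (Real.toNNReal ε) (Real.toNNReal_le_one.mpr hε1.le)).toMeasure)
      {b : Fin p → Bool | ∃ S : Finset (Fin p), (∀ i ∈ S, b i = true) ∧
        S.card = m₀ + 1 ∧ (G.induce (S : Set (Fin p))).Connected}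
      ≤ ENNReal.ofReal (p * (Real.exp 1 * ε * K) ^ (m₀ + 1)) :=
  bernoulli_signal_graphlet_size_bound_general p K m₀ hK ε hε0 hε1 G hdeg
end

section
/- Let G be a simple graph on a finite vertex set V whose maximum degree is at most d, and let x : V → [0,∞) be any nonnegative function. Then there exists a subset I ⊆ V that is an independent set of G (no two vertices of I are adjacent in G) such that Σ_{v∈V} x(v) ≤ (d+1) · Σ_{v∈I} x(v). -/
lemma greedy_aux
    (V : Type*) [Fintype V] [DecidableEq V] (G : SimpleGraph V) [DecidableRel G.Adj]
    (d : ℕ) (hdeg : ∀ v : V, G.degree v ≤ d) (x : V → ℝ) (hx : ∀ v, 0 ≤ x v) :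
    ∀ S : Finset V, ∃ I : Finset V, I ⊆ S ∧
      (∀ i ∈ I, ∀ j ∈ I, i ≠ j → ¬ G.Adj i j) ∧
      (∑ v ∈ S, x v) ≤ (d + 1) * ∑ v ∈ I, x v := by
  intro S
  induction S using Finset.strongInduction with
  | _ S ih =>
    rcases S.eq_empty_or_nonempty with rfl | hS
    · exact ⟨∅, by simp⟩
    · obtain ⟨v, hvS, hvmax⟩ := S.exists_max_image x hS
      set N : Finset V := insert v (G.neighborFinset v ∩ S) with hN
      have hvN : v ∈ N := Finset.mem_insert_self _ _
      have hSN : S \ N ⊂ S := by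
        apply Finset.sdiff_ssubset (by simp [hN, hvS, Finset.insert_subset_iff,
          Finset.inter_subset_right]) ⟨v, hvN⟩
      obtain ⟨I', hI'sub, hI'ind, hI'sum⟩ := ih _ hSN
      have hvI' : v ∉ I' := fun h => (Finset.mem_sdiff.mp (hI'sub h)).2 hvN
      refine ⟨insert v I', ?_, ?_, ?_⟩
      · exact Finset.insert_subset hvS (hI'sub.trans (Finset.sdiff_subset))
      · intro i hi j hj hij
        have key : ∀ k ∈ I', ¬ G.Adj v k := by
          intro k hk hadj
          have := (Finset.mem_sdiff.mp (hI'sub hk)).2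
          exact this (Finset.mem_insert.mpr (Or.inr (Finset.mem_inter.mpr
            ⟨SimpleGraph.mem_neighborFinset _ _ _ |>.mpr hadj,
             (Finset.mem_sdiff.mp (hI'sub hk)).1⟩)))
        rcases Finset.mem_insert.mp hi with rfl | hi' <;>
          rcases Finset.mem_insert.mp hj with rfl | hj'
        · exact absurd rfl hij
        · exact key j hj'
        · exact fun hadj => key i hi' hadj.symm
        · exact hI'ind i hi' j hj' hij
      · have hsplit : ∑ w ∈ S, x w = ∑ w ∈ S ∩ N, x w + ∑ w ∈ S \ N, x w :=
          (Finset.sum_inter_add_sum_sdiff S N x).symm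
        have hcardN : N.card ≤ d + 1 := by
          calc N.card ≤ (G.neighborFinset v ∩ S).card + 1 := Finset.card_insert_le _ _
            _ ≤ G.degree v + 1 := by
                have : (G.neighborFinset v ∩ S).card ≤ (G.neighborFinset v).card :=
                  Finset.card_le_card Finset.inter_subset_left
                rw [SimpleGraph.degree]; exact Nat.add_le_add_right this 1
            _ ≤ d + 1 := Nat.add_le_add_right (hdeg v) 1
        have h1 : ∑ w ∈ S ∩ N, x w ≤ (d + 1) * x v := by
          calc ∑ w ∈ S ∩ N, x w ≤ ∑ _w ∈ S ∩ N, x v :=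
                Finset.sum_le_sum fun w hw => hvmax w (Finset.mem_inter.mp hw).1
            _ = (S ∩ N).card * x v := by simp [Finset.sum_const, nsmul_eq_mul]
            _ ≤ (d + 1) * x v := by
                apply mul_le_mul_of_nonneg_right _ (hx v)
                exact_mod_cast (Finset.card_le_card (Finset.inter_subset_right)).trans hcardN
        rw [hsplit, Finset.sum_insert hvI', mul_add]
        exact add_le_add h1 hI'sum

/-- Let `G` be a simple graph on a finite vertex set `V` with maximum
degree at most `d`, and let `x : V → [0,∞)` be any nonnegative function. Then there is an
independent set `I ⊆ V` of `G` such that `Σ_{v∈V} x v ≤ (d+1) · Σ_{v∈I} x v`. -/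
theorem exists_independent_set_weight_bound
    (V : Type*) [Fintype V] [DecidableEq V] (G : SimpleGraph V) [DecidableRel G.Adj]
    (d : ℕ) (hdeg : ∀ v : V, G.degree v ≤ d) (x : V → ℝ) (hx : ∀ v, 0 ≤ x v) :
    ∃ I : Finset V, (∀ i ∈ I, ∀ j ∈ I, i ≠ j → ¬ G.Adj i j) ∧
      (∑ v, x v) ≤ (d + 1) * ∑ v ∈ I, x v := by
  obtain ⟨I, _, hind, hsum⟩ := greedy_aux V G d hdeg x hx Finset.univ
  exact ⟨I, hind, hsum⟩
end

section
/- Let h be a real number with |h| < 1, let Ω_h be the 2×2 matrix with ones on the diagonal and h on the off-diagonal, and let 0 < ϑ < r. Then the minimum of ρ(D, F; Ω_h) over all pairs of disjoint subsets D, F of {1, 2} with D nonempty equals min{ (ϑ+r)²/(4r), ϑ + (1−|h|)r/2, 2ϑ + (1/4)·[max(√((1−h²)r) − ϑ/√((1−h²)r), 0)]² }. -/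
open Matrix

/-- `ω(D,F;Ω)`: the minimum (infimum) of
`ξᵀ(Ω_{D,D} − Ω_{D,F}(Ω_{F,F})⁻¹Ω_{F,D})ξ` over vectors `ξ ∈ ℝ^D` with `|ξ_i| ≥ 1`. -/
noncomputable def omegaDF {p : ℕ} (Ω : Matrix (Fin p) (Fin p) ℝ)
    (D F : Finset (Fin p)) : ℝ :=
  sInf {q : ℝ | ∃ ξ : ↥D → ℝ, (∀ i, 1 ≤ |ξ i|) ∧
    q = ξ ⬝ᵥ ((Ω.submatrix (fun i : ↥D => (i : Fin p)) (fun j : ↥D => (j : Fin p))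
        - Ω.submatrix (fun i : ↥D => (i : Fin p)) (fun j : ↥F => (j : Fin p))
          * (Ω.submatrix (fun i : ↥F => (i : Fin p)) (fun j : ↥F => (j : Fin p)))⁻¹
          * Ω.submatrix (fun i : ↥F => (i : Fin p)) (fun j : ↥D => (j : Fin p))) *ᵥ ξ)}

/-- `ρ(D,F;Ω)` with parameters `ϑ, r`. -/
noncomputable def rhoDF {p : ℕ} (Ω : Matrix (Fin p) (Fin p) ℝ) (ϑ r : ℝ)
    (D F : Finset (Fin p)) : ℝ :=
  if Even D.card then
    ((D.card : ℝ) + 2 * F.card) * ϑ / 2 + omegaDF Ω D F * r / 4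
  else
    ((D.card : ℝ) + 2 * F.card) * ϑ / 2 + ϑ / 2 +
      (max (Real.sqrt (omegaDF Ω D F * r) - ϑ / Real.sqrt (omegaDF Ω D F * r)) 0) ^ 2 / 4

/-!
For `p = 2` there are only five admissible pairs `(D, F)`: `({i}, ∅)`, `({i}, {j})` with
`i ≠ j`, and `({1, 2}, ∅)`. On a singleton `D` the Schur complement is the scalar
`Ω_ii − Ω_ij Ω_jj⁻¹ Ω_ji`, so `ω` is `1` or `1 − h²`; for `D = {1, 2}` the quadratic form
`a² + 2hab + b²` on `|a|, |b| ≥ 1` is `(|a| − |b|)² + 2(1 − |h|)|a||b|` at worst, so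
`ω = 2 − 2|h|`. The three values of `ρ` are the three terms of the minimum.
-/

section BoxQuadInf

variable {ι κ : Type*} [Fintype ι] [Fintype κ]

noncomputable def boxQuadInf (M : Matrix ι ι ℝ) : ℝ :=
  sInf {q : ℝ | ∃ ξ : ι → ℝ, (∀ i, 1 ≤ |ξ i|) ∧ q = ξ ⬝ᵥ (M *ᵥ ξ)}

lemma boxQuadInf_submatrix_equiv (M : Matrix κ κ ℝ) (e : ι ≃ κ) :
    boxQuadInf (M.submatrix e e) = boxQuadInf M := by
  have quad_eq (ξ : ι → ℝ) :
      ξ ⬝ᵥ (M.submatrix e e *ᵥ ξ) = (ξ ∘ e.symm) ⬝ᵥ (M *ᵥ (ξ ∘ e.symm)) := by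
    rw [submatrix_mulVec_equiv, comp_equiv_symm_dotProduct]
  unfold boxQuadInf
  congr 1
  ext q
  constructor
  · rintro ⟨ξ, hξ, rfl⟩
    exact ⟨ξ ∘ e.symm, fun k => hξ _, quad_eq ξ⟩
  · rintro ⟨η, hη, rfl⟩
    refine ⟨η ∘ e, fun i => hη _, ?_⟩
    rw [quad_eq]
    simp [Function.comp_def]

lemma boxQuadInf_of_unique [Unique ι] (M : Matrix ι ι ℝ) (hM : 0 ≤ M default default) :
    boxQuadInf M = M default default := by
  have quad_eq (ξ : ι → ℝ) : ξ ⬝ᵥ (M *ᵥ ξ) = M default default * ξ default ^ 2 := by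
    simp [dotProduct, mulVec]
    ring
  refine IsLeast.csInf_eq ⟨⟨fun _ => 1, fun _ => by simp, by simp [quad_eq]⟩, ?_⟩
  rintro q ⟨ξ, hξ, rfl⟩
  rw [quad_eq]
  exact le_mul_of_one_le_right hM ((one_le_sq_iff_one_le_abs _).mpr (hξ default))

lemma boxQuadInf_two_by_two {h : ℝ} (hh : |h| ≤ 1) :
    boxQuadInf !![1, h; h, 1] = 2 - 2 * |h| := by
  have quad_eq (ξ : Fin 2 → ℝ) :
      ξ ⬝ᵥ (!![1, h; h, 1] *ᵥ ξ) = ξ 0 ^ 2 + 2 * h * ξ 0 * ξ 1 + ξ 1 ^ 2 := by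
    simp [dotProduct, Fin.sum_univ_two]
    ring
  refine IsLeast.csInf_eq ⟨⟨![1, if 0 ≤ h then -1 else 1], ?_, ?_⟩, ?_⟩
  · intro i
    fin_cases i <;> split_ifs <;> simp
  · rw [quad_eq]
    split_ifs with hs
    · simp [abs_of_nonneg hs]; ring
    · simp [abs_of_neg (not_le.mp hs)]; ring
  · rintro q ⟨ξ, hξ, rfl⟩
    have ha := hξ 0
    have hb := hξ 1
    have cross : -(|h| * (|ξ 0| * |ξ 1|)) ≤ h * (ξ 0 * ξ 1) := by
      rw [← abs_mul, ← abs_mul]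
      exact neg_abs_le _
    rw [quad_eq]
    nlinarith [sq_abs (ξ 0), sq_abs (ξ 1), sq_nonneg (|ξ 0| - |ξ 1|),
      mul_le_mul ha hb zero_le_one (abs_nonneg _)]

end BoxQuadInf

section SchurComplement

variable {p : ℕ} (Ω : Matrix (Fin p) (Fin p) ℝ)

noncomputable def schurComplDF (D F : Finset (Fin p)) : Matrix D D ℝ :=
  Ω.submatrix (fun i : D => (i : Fin p)) (fun j : D => (j : Fin p))
    - Ω.submatrix (fun i : D => (i : Fin p)) (fun j : F => (j : Fin p))
      * (Ω.submatrix (fun i : F => (i : Fin p)) (fun j : F => (j : Fin p)))⁻¹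
      * Ω.submatrix (fun i : F => (i : Fin p)) (fun j : D => (j : Fin p))

lemma omegaDF_eq_boxQuadInf (D F : Finset (Fin p)) :
    omegaDF Ω D F = boxQuadInf (schurComplDF Ω D F) :=
  rfl

lemma schurComplDF_empty (D : Finset (Fin p)) : schurComplDF Ω D ∅ = Ω.submatrix (↑) (↑) := by
  ext a b
  simp [schurComplDF, mul_apply]

lemma schurComplDF_singleton_apply (i j : Fin p) :
    schurComplDF Ω {i} {j} default default = Ω i i - Ω i j * (Ω j j)⁻¹ * Ω j i := by
  simp [schurComplDF, mul_apply, inv_subsingleton, Ring.inverse_eq_inv']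

lemma omegaDF_singleton_empty (i : Fin p) (hi : 0 ≤ Ω i i) : omegaDF Ω {i} ∅ = Ω i i := by
  rw [omegaDF_eq_boxQuadInf, schurComplDF_empty, boxQuadInf_of_unique] <;> simp [hi]

lemma omegaDF_singleton_singleton (i j : Fin p) (hij : 0 ≤ Ω i i - Ω i j * (Ω j j)⁻¹ * Ω j i) :
    omegaDF Ω {i} {j} = Ω i i - Ω i j * (Ω j j)⁻¹ * Ω j i := by
  rw [omegaDF_eq_boxQuadInf, boxQuadInf_of_unique] <;> rw [schurComplDF_singleton_apply]
  exact hij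

lemma omegaDF_univ_empty : omegaDF Ω Finset.univ ∅ = boxQuadInf Ω := by
  rw [omegaDF_eq_boxQuadInf, schurComplDF_empty]
  exact boxQuadInf_submatrix_equiv Ω (Equiv.subtypeUnivEquiv Finset.mem_univ)

end SchurComplement

lemma Finset.Nonempty.fin_two_cases {D F : Finset (Fin 2)} (hD : D.Nonempty)
    (hDF : Disjoint D F) :
    (∃ i, D = {i} ∧ F = ∅) ∨ (∃ i j, i ≠ j ∧ D = {i} ∧ F = {j}) ∨ (D = .univ ∧ F = ∅) := by
  revert D F
  decide

lemma add_sq_max_sqrt_sub_div_sqrt {ϑ r : ℝ} (hr : 0 < r) (hϑr : ϑ ≤ r) :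
    ϑ + max (√r - ϑ / √r) 0 ^ 2 / 4 = (ϑ + r) ^ 2 / (4 * r) := by
  have hs : 0 < √r := Real.sqrt_pos.mpr hr
  have hsub : √r - ϑ / √r = (r - ϑ) / √r := by
    field_simp
    rw [Real.sq_sqrt hr.le]
  rw [hsub, max_eq_left (div_nonneg (sub_nonneg.mpr hϑr) hs.le), div_pow, Real.sq_sqrt hr.le]
  field_simp
  ring

section TwoByTwo

variable {h : ℝ} (ϑ r : ℝ)

lemma rhoDF_two_by_two_singleton_empty (hr : 0 < r) (hϑr : ϑ ≤ r) (i : Fin 2) :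
    rhoDF !![1, h; h, 1] ϑ r {i} ∅ = (ϑ + r) ^ 2 / (4 * r) := by
  have hω : omegaDF !![1, h; h, 1] {i} ∅ = 1 := by
    rw [omegaDF_singleton_empty] <;> fin_cases i <;> simp
  rw [← add_sq_max_sqrt_sub_div_sqrt hr hϑr]
  simp [rhoDF, hω]

lemma rhoDF_two_by_two_singleton_singleton (hh : |h| < 1) {i j : Fin 2} (hij : i ≠ j) :
    rhoDF !![1, h; h, 1] ϑ r {i} {j} =
      2 * ϑ + max (√((1 - h ^ 2) * r) - ϑ / √((1 - h ^ 2) * r)) 0 ^ 2 / 4 := by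
  have hh2 : 0 ≤ 1 - h ^ 2 := by nlinarith [sq_abs h, abs_nonneg h]
  have hschur : !![1, h; h, 1] i i - !![1, h; h, 1] i j * (!![1, h; h, 1] j j)⁻¹ *
      !![1, h; h, 1] j i = 1 - h ^ 2 := by
    fin_cases i <;> fin_cases j <;> simp at hij ⊢ <;> ring
  have hω : omegaDF !![1, h; h, 1] {i} {j} = 1 - h ^ 2 := by
    rw [omegaDF_singleton_singleton _ _ _ (hschur ▸ hh2), hschur]
  simp [rhoDF, hω]
  ring

lemma rhoDF_two_by_two_univ_empty (hh : |h| < 1) :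
    rhoDF !![1, h; h, 1] ϑ r .univ ∅ = ϑ + (1 - |h|) * r / 2 := by
  simp [rhoDF, omegaDF_univ_empty, boxQuadInf_two_by_two hh.le]
  ring

end TwoByTwo

lemma rhoDF_two_by_two_values {h : ℝ} (hh : |h| < 1) {ϑ r : ℝ} (hr : 0 < r) (hϑr : ϑ ≤ r) :
    {x : ℝ | ∃ D F : Finset (Fin 2), D.Nonempty ∧ Disjoint D F ∧
        x = rhoDF !![1, h; h, 1] ϑ r D F} =
      {(ϑ + r) ^ 2 / (4 * r), ϑ + (1 - |h|) * r / 2,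
        2 * ϑ + max (√((1 - h ^ 2) * r) - ϑ / √((1 - h ^ 2) * r)) 0 ^ 2 / 4} := by
  have h01 : (0 : Fin 2) ≠ 1 := by decide
  ext x
  simp only [Set.mem_insert_iff, Set.mem_singleton_iff, Set.mem_ofPred_eq]
  constructor
  · rintro ⟨D, F, hD, hDF, rfl⟩
    rcases hD.fin_two_cases hDF with ⟨i, rfl, rfl⟩ | ⟨i, j, hij, rfl, rfl⟩ | ⟨rfl, rfl⟩
    · exact .inl (rhoDF_two_by_two_singleton_empty ϑ r hr hϑr i)
    · exact .inr (.inr (rhoDF_two_by_two_singleton_singleton ϑ r hh hij))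
    · exact .inr (.inl (rhoDF_two_by_two_univ_empty ϑ r hh))
  · rintro (rfl | rfl | rfl)
    · exact ⟨{0}, ∅, by simp, by simp, (rhoDF_two_by_two_singleton_empty ϑ r hr hϑr 0).symm⟩
    · exact ⟨.univ, ∅, by simp, by simp, (rhoDF_two_by_two_univ_empty ϑ r hh).symm⟩
    · exact ⟨{0}, {1}, by simp, by decide,
        (rhoDF_two_by_two_singleton_singleton ϑ r hh h01).symm⟩

/-- For the 2×2 matrix `Ω_h` with ones on the diagonal and `h`
(`|h| < 1`) off the diagonal, and `0 < ϑ < r`, the minimum of `ρ(D,F;Ω_h)` over all pairs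
of disjoint subsets `D, F ⊆ {1,2}` with `D` nonempty equals
`min{(ϑ+r)²/(4r), ϑ + (1−|h|)r/2, 2ϑ + (1/4)[(√((1−h²)r) − ϑ/√((1−h²)r))₊]²}`. -/
theorem rho_min_two_by_two (h : ℝ) (hh : |h| < 1) (ϑ r : ℝ) (h0 : 0 < ϑ) (hr : ϑ < r) :
    IsLeast {x : ℝ | ∃ D F : Finset (Fin 2), D.Nonempty ∧ Disjoint D F ∧
        x = rhoDF !![1, h; h, 1] ϑ r D F}
      (min ((ϑ + r) ^ 2 / (4 * r))
        (min (ϑ + (1 - |h|) * r / 2)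
          (2 * ϑ + (max (Real.sqrt ((1 - h ^ 2) * r)
              - ϑ / Real.sqrt ((1 - h ^ 2) * r)) 0) ^ 2 / 4))) := by
  rw [rhoDF_two_by_two_values hh (h0.trans hr) hr.le]
  exact (isLeast_singleton.insert _).insert _
end

section
/- Let Ω be a p×p real symmetric positive definite matrix with all diagonal entries equal to 1 and |Ω(i,j)| ≤ 4√2 − 5 for all i ≠ j. Let ϑ > 0 and r satisfy ϑ < r < (3 + 2√2)ϑ. Then for every pair of disjoint subsets D, F of {1,…,p} with D nonempty, ρ(D, F; Ω) ≥ (ϑ + r)²/(4r). -/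
/-!
If `|D| + 2|F| ≥ 3`, the first term of `ρ` alone is at least `2ϑ` (`ω ≥ 0` because a Schur
complement of a positive definite matrix is positive semidefinite), and `2ϑ ≥ (ϑ + r)²/(4r)`
exactly when `(3 - 2√2)ϑ ≤ r ≤ (3 + 2√2)ϑ`. Otherwise `F = ∅` and `|D| ∈ {1, 2}`. For `|D| = 1`
the unit diagonal gives `ω ≥ 1`, and `ρ` is increasing in `ω` with value `(ϑ + r)²/(4r)` at
`ω = 1`. For `|D| = 2` the entrywise bound gives `ω ≥ 2(1 - (4√2 - 5)) = (2√2 - 2)²`, which is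
exactly what `ϑ + ωr/4 ≥ (ϑ + r)²/(4r)` requires once `r ≤ (3 + 2√2)ϑ`.
-/

open Matrix

theorem two_mul_one_sub_le_of_one_le_abs {x y a b c : ℝ} (hx : 1 ≤ |x|) (hy : 1 ≤ |y|)
    (ha : |a| ≤ c) (hb : |b| ≤ c) (hc : c ≤ 1) :
    2 * (1 - c) ≤ x * (x + a * y) + y * (b * x + y) := by
  have hxy : 1 ≤ |x| * |y| := by nlinarith [abs_nonneg x]
  have hcross : ∀ m, |m| ≤ c → -(c * (|x| * |y|)) ≤ m * (x * y) := fun m hm => by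
    refine neg_le_of_abs_le ?_
    rw [abs_mul, abs_mul]
    exact mul_le_mul_of_nonneg_right hm (by positivity)
  nlinarith [hcross a ha, hcross b hb, sq_abs x, sq_abs y, sq_nonneg (|x| - |y|)]

namespace Matrix

theorem PosDef.posSemidef_schurComplement_submatrix {n K : Type*} [Field K] [PartialOrder K]
    [StarRing K] [StarOrderedRing K] {M : Matrix n n K} (hM : M.PosDef)
    {ι κ : Type*} [Fintype ι] [Fintype κ] [DecidableEq κ] (e : ι → n) {f : κ → n}
    (hf : Function.Injective f) :
    (M.submatrix e e - M.submatrix e f * (M.submatrix f f)⁻¹ * M.submatrix f e).PosSemidef := by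
  have hff := hM.submatrix hf
  have : Invertible (M.submatrix f f) := hff.isUnit.invertible
  have hfe : M.submatrix f e = (M.submatrix e f)ᴴ := by
    rw [conjTranspose_submatrix, hM.isHermitian.eq]
  have hblocks : M.submatrix (Sum.elim e f) (Sum.elim e f)
      = fromBlocks (M.submatrix e e) (M.submatrix e f) (M.submatrix e f)ᴴ (M.submatrix f f) := by
    rw [← hfe]
    ext (i | i) (j | j) <;> rfl
  rw [hfe, ← PosDef.fromBlocks₂₂ _ _ hff, ← hblocks]
  exact hM.posSemidef.submatrix _

variable {ι : Type*} [Fintype ι] {M : Matrix ι ι ℝ} {ξ : ι → ℝ}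

theorem one_le_dotProduct_mulVec_of_card_eq_one (hι : Fintype.card ι = 1)
    (hdiag : ∀ i, M i i = 1) (hξ : ∀ i, 1 ≤ |ξ i|) : 1 ≤ ξ ⬝ᵥ (M *ᵥ ξ) := by
  obtain ⟨_⟩ := Fintype.card_eq_one_iff_nonempty_unique.mp hι
  have h := hξ default
  simp only [dotProduct, mulVec, Fintype.sum_unique, hdiag]
  nlinarith [sq_abs (ξ default), abs_nonneg (ξ default)]

theorem two_mul_one_sub_le_dotProduct_mulVec_of_card_eq_two (hι : Fintype.card ι = 2)
    (hdiag : ∀ i, M i i = 1) {c : ℝ} (hoff : ∀ i j, i ≠ j → |M i j| ≤ c) (hc : c ≤ 1)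
    (hξ : ∀ i, 1 ≤ |ξ i|) : 2 * (1 - c) ≤ ξ ⬝ᵥ (M *ᵥ ξ) := by
  let e := (Fintype.equivFinOfCardEq hι).symm
  have h01 : e 0 ≠ e 1 := e.injective.ne (by decide)
  have hsum : ξ ⬝ᵥ (M *ᵥ ξ) = ξ (e 0) * (M (e 0) (e 0) * ξ (e 0) + M (e 0) (e 1) * ξ (e 1))
      + ξ (e 1) * (M (e 1) (e 0) * ξ (e 0) + M (e 1) (e 1) * ξ (e 1)) := by
    simp only [dotProduct, mulVec, ← e.sum_comp, Fin.sum_univ_two]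
  rw [hsum, hdiag, hdiag, one_mul, one_mul]
  exact two_mul_one_sub_le_of_one_le_abs (hξ _) (hξ _) (hoff _ _ h01) (hoff _ _ h01.symm) hc

end Matrix

noncomputable def schurComplementDF {p : ℕ} (Ω : Matrix (Fin p) (Fin p) ℝ)
    (D F : Finset (Fin p)) : Matrix ↥D ↥D ℝ :=
  Ω.submatrix (fun i : ↥D => (i : Fin p)) (fun j : ↥D => (j : Fin p))
    - Ω.submatrix (fun i : ↥D => (i : Fin p)) (fun j : ↥F => (j : Fin p))
      * (Ω.submatrix (fun i : ↥F => (i : Fin p)) (fun j : ↥F => (j : Fin p)))⁻¹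
      * Ω.submatrix (fun i : ↥F => (i : Fin p)) (fun j : ↥D => (j : Fin p))

section omegaDF

variable {p : ℕ} {Ω : Matrix (Fin p) (Fin p) ℝ} {D F : Finset (Fin p)}

theorem le_omegaDF {c : ℝ}
    (h : ∀ ξ : ↥D → ℝ, (∀ i, 1 ≤ |ξ i|) → c ≤ ξ ⬝ᵥ (schurComplementDF Ω D F *ᵥ ξ)) :
    c ≤ omegaDF Ω D F :=
  le_csInf ⟨_, fun _ => 1, by simp, rfl⟩ (by rintro _ ⟨ξ, hξ, rfl⟩; exact h ξ hξ)

theorem omegaDF_nonneg (hΩ : Ω.PosDef) : 0 ≤ omegaDF Ω D F :=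
  le_omegaDF fun ξ _ => by
    have h := (hΩ.posSemidef_schurComplement_submatrix (fun i : ↥D => (i : Fin p))
      (f := fun j : ↥F => (j : Fin p)) Subtype.val_injective).dotProduct_mulVec_nonneg ξ
    rwa [star_trivial] at h

theorem schurComplementDF_empty :
    schurComplementDF Ω D ∅ = Ω.submatrix (fun i : ↥D => (i : Fin p)) (fun j : ↥D => j) := by
  ext i j
  simp [schurComplementDF, Matrix.mul_apply]

theorem one_le_omegaDF_empty (hdiag : ∀ i, Ω i i = 1) (hD : D.card = 1) :
    1 ≤ omegaDF Ω D ∅ :=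
  le_omegaDF fun ξ hξ => by
    rw [schurComplementDF_empty]
    exact one_le_dotProduct_mulVec_of_card_eq_one (by simpa using hD) (fun i : ↥D => hdiag i) hξ

theorem two_mul_one_sub_le_omegaDF_empty (hdiag : ∀ i, Ω i i = 1) {c : ℝ}
    (hoff : ∀ i j, i ≠ j → |Ω i j| ≤ c) (hc : c ≤ 1) (hD : D.card = 2) :
    2 * (1 - c) ≤ omegaDF Ω D ∅ :=
  le_omegaDF fun ξ hξ => by
    rw [schurComplementDF_empty]
    exact two_mul_one_sub_le_dotProduct_mulVec_of_card_eq_two (by simpa using hD)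
      (fun i : ↥D => hdiag i) (fun _ _ hij => hoff _ _ (Subtype.coe_ne_coe.mpr hij)) hc hξ

end omegaDF

theorem two_mul_le_rhoDF {p : ℕ} {Ω : Matrix (Fin p) (Fin p) ℝ} {ϑ r : ℝ}
    {D F : Finset (Fin p)} (hϑ : 0 ≤ ϑ) (hr : 0 ≤ r) (hω : 0 ≤ omegaDF Ω D F)
    (hcard : 3 ≤ D.card + 2 * F.card) : 2 * ϑ ≤ rhoDF Ω ϑ r D F := by
  unfold rhoDF
  split_ifs with hev
  · have h4 : (4 : ℝ) ≤ D.card + 2 * F.card := by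
      obtain ⟨t, ht⟩ := hev
      exact_mod_cast (show 4 ≤ D.card + 2 * F.card by omega)
    nlinarith [mul_nonneg hω hr]
  · have h3 : (3 : ℝ) ≤ D.card + 2 * F.card := by exact_mod_cast hcard
    nlinarith [sq_nonneg (max (√(omegaDF Ω D F * r) - ϑ / √(omegaDF Ω D F * r)) 0)]

section scalar

variable {ϑ r ω : ℝ}

theorem sq_add_div_le_two_mul (hϑ : 0 < ϑ) (hr : ϑ ≤ r) (hr' : r ≤ (3 + 2 * √2) * ϑ) :
    (ϑ + r) ^ 2 / (4 * r) ≤ 2 * ϑ := by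
  have h2 : √2 ^ 2 = 2 := Real.sq_sqrt (by norm_num)
  have hlow : (3 - 2 * √2) * ϑ ≤ r := by nlinarith [Real.sqrt_nonneg 2]
  rw [div_le_iff₀ (by linarith)]
  nlinarith [mul_nonneg (sub_nonneg.mpr hr') (sub_nonneg.mpr hlow),
    show √2 ^ 2 * ϑ ^ 2 = 2 * ϑ ^ 2 by rw [h2]]

theorem sq_add_div_le_add_mul (hϑ : 0 < ϑ) (hr : ϑ ≤ r) (hr' : r ≤ (3 + 2 * √2) * ϑ)
    (hω : 2 * (1 - (4 * √2 - 5)) ≤ ω) : (ϑ + r) ^ 2 / (4 * r) ≤ ϑ + ω * r / 4 := by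
  have h2 : √2 ^ 2 = 2 := Real.sq_sqrt (by norm_num)
  have hgap : r - ϑ ≤ (2 * √2 - 2) * r := by nlinarith [Real.sqrt_nonneg 2]
  have hsq : (r - ϑ) ^ 2 ≤ ω * r ^ 2 := by
    nlinarith [mul_le_mul hgap hgap (sub_nonneg.mpr hr) (by nlinarith), sq_nonneg r]
  rw [div_le_iff₀ (by linarith)]
  nlinarith

theorem sq_add_div_four_mul_eq (hr : 0 < r) :
    (ϑ + r) ^ 2 / (4 * r) = ϑ + (√r - ϑ / √r) ^ 2 / 4 := by
  have hs : 0 < √r := Real.sqrt_pos.mpr hr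
  field_simp
  rw [Real.sq_sqrt hr.le]
  ring

theorem sq_add_div_le_add_sq_max (hϑ : 0 ≤ ϑ) (hr : ϑ < r) (hω : 1 ≤ ω) :
    (ϑ + r) ^ 2 / (4 * r) ≤ ϑ + max (√(ω * r) - ϑ / √(ω * r)) 0 ^ 2 / 4 := by
  have hr0 : 0 < r := hϑ.trans_lt hr
  have hs : 0 < √r := Real.sqrt_pos.mpr hr0
  have hst : √r ≤ √(ω * r) := Real.sqrt_le_sqrt (by nlinarith)
  have hpos : 0 ≤ √r - ϑ / √r := by
    rw [sub_nonneg, div_le_iff₀ hs, ← sq, Real.sq_sqrt hr0.le]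
    exact hr.le
  have hmono : √r - ϑ / √r ≤ max (√(ω * r) - ϑ / √(ω * r)) 0 :=
    le_max_of_le_left (sub_le_sub hst (div_le_div_of_nonneg_left hϑ hs hst))
  rw [sq_add_div_four_mul_eq hr0]
  gcongr

end scalar

theorem rho_lower_bound_cor_entrywise1_general
    (p : ℕ) (Ω : Matrix (Fin p) (Fin p) ℝ) (hpd : Ω.PosDef)
    (hdiag : ∀ i, Ω i i = 1)
    (hoff : ∀ i j, i ≠ j → |Ω i j| ≤ 4 * Real.sqrt 2 - 5)
    (ϑ r : ℝ) (h0 : 0 < ϑ) (h1 : ϑ < r) (h2 : r < (3 + 2 * Real.sqrt 2) * ϑ)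
    (D F : Finset (Fin p)) (hD : D.Nonempty) :
    (ϑ + r) ^ 2 / (4 * r) ≤ rhoDF Ω ϑ r D F := by
  obtain hbig | hsmall := le_or_gt 3 (D.card + 2 * F.card)
  · exact (sq_add_div_le_two_mul h0 h1.le h2.le).trans
      (two_mul_le_rhoDF h0.le (h0.trans h1).le (omegaDF_nonneg hpd) hbig)
  have hDpos := hD.card_pos
  obtain rfl : F = ∅ := Finset.card_eq_zero.mp (by omega)
  obtain hcard | hcard : D.card = 1 ∨ D.card = 2 := by omega
  · have := sq_add_div_le_add_sq_max h0.le h1 (one_le_omegaDF_empty hdiag hcard)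
    simpa [rhoDF, hcard] using this
  · have hc : 4 * √2 - 5 ≤ 1 := by
      nlinarith [Real.sq_sqrt (show (0 : ℝ) ≤ 2 by norm_num), Real.sqrt_nonneg 2]
    have := sq_add_div_le_add_mul h0 h1.le h2.le
      (two_mul_one_sub_le_omegaDF_empty hdiag hoff hc hcard)
    simpa [rhoDF, hcard] using this

/-- Let `Ω` be a `p×p` real symmetric positive definite matrix with unit
diagonal and `|Ω(i,j)| ≤ 4√2 − 5` for `i ≠ j`. Let `0 < ϑ` and `ϑ < r < (3 + 2√2)ϑ`.
Then for every pair of disjoint subsets `D, F` with `D` nonempty,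
`ρ(D,F;Ω) ≥ (ϑ + r)²/(4r)`. -/
theorem rho_lower_bound_cor_entrywise1
    (p : ℕ) (Ω : Matrix (Fin p) (Fin p) ℝ) (hsymm : Ω.IsSymm) (hpd : Ω.PosDef)
    (hdiag : ∀ i, Ω i i = 1)
    (hoff : ∀ i j, i ≠ j → |Ω i j| ≤ 4 * Real.sqrt 2 - 5)
    (ϑ r : ℝ) (h0 : 0 < ϑ) (h1 : ϑ < r) (h2 : r < (3 + 2 * Real.sqrt 2) * ϑ)
    (D F : Finset (Fin p)) (hD : D.Nonempty) (hDF : Disjoint D F) :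
    (ϑ + r) ^ 2 / (4 * r) ≤ rhoDF Ω ϑ r D F :=
  rho_lower_bound_cor_entrywise1_general p Ω hpd hdiag hoff ϑ r h0 h1 h2 D F hD
end

section
/- Let ϑ > 0 and r > ϑ, set T = r/ϑ, and let N be the unique positive integer with 2N − 1 ≤ (T + 1/T)/2 < 2N + 1. Let Ω be a p×p real symmetric positive definite matrix with all diagonal entries equal to 1 such that: for every integer 2 ≤ k ≤ 2N − 1, λ_k*(Ω) ≥ max over integers j with (k+1)/2 ≤ j ≤ min(k, N) of [ ((T+1/T)/2 − 2j + 2 + √(((T+1/T)/2 − 2j + 2)² − 1)) / ((2k − 2j + 1)·T) ]; and for every integer 2 ≤ k ≤ 2N, λ_k*(Ω) ≥ max over integers j with k/2 ≤ j ≤ min(k−1, N) of [ ((T+1/T)/2 + 1 − 2j) / ((k − j)·T) ]. Then for every pair of disjoint subsets D, F of {1,…,p} with D nonempty, ρ(D, F; Ω) ≥ (ϑ + r)²/(4r). -/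
/-!
Completing `ξ ∈ ℝ^D` by `η = -(Ω_FF)⁻¹ Ω_FD ξ` turns the Schur-complement form into the quadratic
form of `Ω` on `D ∪ F`, so `ω(D,F;Ω) ≥ |D| λ*_{|D|+|F|}(Ω)`. Put `M = (T + 1/T)/2`; the target
`(ϑ + r)²/(4r)` equals `(M + 1)ϑ/2`, and only the case where `(|D| + 2|F|)ϑ/2` falls short of it
needs work. For `|D| = 2m` the hypothesis with `k = |D| + |F|`, `j = m + |F|` gives
`ω r/4 ≥ (M + 1 - |D| - 2|F|)ϑ/2`. For `|D| = 2m + 1` put `c = M - |D| - 2|F| + 1 > 1`; the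
hypothesis with `j = m + 1 + |F|` (or the unit diagonal if `|D| = 1`, `F = ∅`) gives
`ωT ≥ c + √(c² - 1)`, the larger root of `u² - 2cu + 1`, which is exactly what makes
`(√(ωr) - ϑ/√(ωr))² ≥ 2(c - 1)ϑ`.
-/

open Matrix

/-- `λ_k*(Ω)`: the minimum over all `k×k` principal submatrices of `Ω` of the smallest
eigenvalue, characterized as the minimal Rayleigh quotient over unit vectors. -/
noncomputable def lambdaStar {p : ℕ} (Ω : Matrix (Fin p) (Fin p) ℝ) (k : ℕ) : ℝ :=
  sInf {lam : ℝ | ∃ S : Finset (Fin p), S.card = k ∧ ∃ ξ : ↥S → ℝ,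
    (∑ i, ξ i ^ 2) = 1 ∧
    lam = ξ ⬝ᵥ (Ω.submatrix (fun i : ↥S => (i : Fin p)) (fun j : ↥S => (j : Fin p)) *ᵥ ξ)}

lemma dotProduct_mulVec_schurComplement {m n : Type*} [Fintype m] [Fintype n] [DecidableEq n]
    (A : Matrix m m ℝ) (B : Matrix m n ℝ) {C : Matrix n n ℝ} (hC : C.PosDef) (x : m → ℝ) :
    x ⬝ᵥ ((A - B * C⁻¹ * Bᵀ) *ᵥ x) =
      (x ⊕ᵥ -((C⁻¹ * Bᵀ) *ᵥ x)) ⬝ᵥ (fromBlocks A B Bᵀ C *ᵥ (x ⊕ᵥ -((C⁻¹ * Bᵀ) *ᵥ x))) := by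
  have := hC.isUnit.invertible
  have h := schur_complement_eq₂₂ A B x (-((C⁻¹ * Bᵀ) *ᵥ x)) hC.isHermitian
  simp only [star_trivial, conjTranspose_eq_transpose_of_trivial, add_neg_cancel,
    zero_vecMul, zero_dotProduct, zero_add] at h
  simp only [dotProduct_mulVec, h]

lemma two_mul_sub_one_mul_le_sq_max_sqrt_sub {ϑ c x : ℝ} (hϑ : 0 < ϑ) (hc : 1 ≤ c)
    (hx : (c + √(c ^ 2 - 1)) * ϑ ≤ x) :
    2 * (c - 1) * ϑ ≤ max (√x - ϑ / √x) 0 ^ 2 := by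
  set s := √(c ^ 2 - 1)
  have hs : 0 ≤ s := Real.sqrt_nonneg _
  have hs2 : s ^ 2 = c ^ 2 - 1 := Real.sq_sqrt (by nlinarith)
  have hϑx : ϑ ≤ x := by nlinarith
  have hx0 : 0 < x := by linarith
  have hq : 0 < √x := Real.sqrt_pos.mpr hx0
  have hq2 : √x ^ 2 = x := Real.sq_sqrt hx0.le
  have hmax : max (√x - ϑ / √x) 0 = √x - ϑ / √x :=
    max_eq_left (by rw [sub_nonneg, div_le_iff₀ hq, ← sq, hq2]; exact hϑx)
  have hsq : (√x - ϑ / √x) ^ 2 = (x ^ 2 - 2 * ϑ * x + ϑ ^ 2) / x := by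
    field_simp
    rw [hq2]
    ring
  rw [hmax, hsq, le_div_iff₀ hx0]
  -- `x` lies above the larger root `(c + s) ϑ` of `X² - 2cϑX + ϑ²`
  have hroots : x ^ 2 - 2 * c * ϑ * x + ϑ ^ 2 = (x - (c + s) * ϑ) * (x - (c - s) * ϑ) := by
    linear_combination ϑ ^ 2 * hs2
  linarith [mul_nonneg (sub_nonneg.2 hx) (by nlinarith : 0 ≤ x - (c - s) * ϑ)]

section LambdaStar

variable {p : ℕ} {Ω : Matrix (Fin p) (Fin p) ℝ} {D F : Finset (Fin p)} {ϑ T : ℝ} {N : ℕ}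

lemma dotProduct_mulVec_submatrix_nonneg (hΩ : Ω.PosSemidef) (S : Finset (Fin p)) (ξ : S → ℝ) :
    0 ≤ ξ ⬝ᵥ (Ω.submatrix (↑) (↑) *ᵥ ξ) := by
  simpa using (hΩ.submatrix ((↑) : S → Fin p)).dotProduct_mulVec_nonneg ξ

lemma lambdaStar_nonneg (hΩ : Ω.PosSemidef) (k : ℕ) : 0 ≤ lambdaStar Ω k := by
  refine Real.sInf_nonneg ?_
  rintro _ ⟨S, -, ξ, -, rfl⟩
  exact dotProduct_mulVec_submatrix_nonneg hΩ S ξ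

lemma lambdaStar_card_le (hΩ : Ω.PosSemidef) (S : Finset (Fin p)) {ξ : S → ℝ}
    (hξ : ∑ i, ξ i ^ 2 = 1) :
    lambdaStar Ω S.card ≤ ξ ⬝ᵥ (Ω.submatrix (↑) (↑) *ᵥ ξ) := by
  refine csInf_le ⟨0, ?_⟩ ⟨S, rfl, ξ, hξ, rfl⟩
  rintro _ ⟨S, -, ξ, -, rfl⟩
  exact dotProduct_mulVec_submatrix_nonneg hΩ S ξ

lemma lambdaStar_mul_sum_sq_le (hΩ : Ω.PosSemidef) (S : Finset (Fin p)) (ξ : S → ℝ) :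
    lambdaStar Ω S.card * ∑ i, ξ i ^ 2 ≤ ξ ⬝ᵥ (Ω.submatrix (↑) (↑) *ᵥ ξ) := by
  rcases (Finset.sum_nonneg fun i _ => sq_nonneg (ξ i)).eq_or_lt with hs | hs
  · rw [← hs, mul_zero]
    exact dotProduct_mulVec_submatrix_nonneg hΩ S ξ
  have hunit : ∑ i, ((√(∑ i, ξ i ^ 2))⁻¹ • ξ) i ^ 2 = 1 := by
    simp only [Pi.smul_apply, smul_eq_mul, mul_pow, ← Finset.mul_sum, inv_pow,
      Real.sq_sqrt hs.le]
    exact inv_mul_cancel₀ hs.ne'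
  have h := lambdaStar_card_le hΩ S hunit
  rw [mulVec_smul, dotProduct_smul, smul_dotProduct, smul_eq_mul, smul_eq_mul, ← mul_assoc,
    ← mul_inv, ← sq, Real.sq_sqrt hs.le, le_inv_mul_iff₀ hs] at h
  rwa [mul_comm]

lemma card_mul_lambdaStar_le_omegaDF (hΩ : Ω.PosDef) (hDF : Disjoint D F) :
    D.card * lambdaStar Ω (D.card + F.card) ≤ omegaDF Ω D F := by
  classical
  refine le_csInf ⟨_, fun _ => 1, fun _ => by simp, rfl⟩ ?_
  rintro _ ⟨ξ, hξ, rfl⟩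
  set e := Equiv.Finset.union D F hDF
  set B : Matrix D F ℝ := Ω.submatrix (↑) (↑)
  set C : Matrix F F ℝ := Ω.submatrix (↑) (↑)
  set x := ξ ⊕ᵥ -((C⁻¹ * Bᵀ) *ᵥ ξ)
  have hBT : Bᵀ = Ω.submatrix (↑) (↑) := by
    rw [transpose_submatrix, ← conjTranspose_eq_transpose_of_trivial, hΩ.isHermitian.eq]
  have hblocks : (Ω.submatrix ((↑) : ↥(D ∪ F) → Fin p) (↑)).submatrix e e =
      fromBlocks (Ω.submatrix (↑) (↑)) B Bᵀ C := by
    rw [hBT]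
    ext (i | i) (j | j) <;> rfl
  have hnorm : (D.card : ℝ) ≤ ∑ i, (x ∘ e.symm) i ^ 2 := by
    rw [Function.comp_def, Equiv.sum_comp e.symm (fun s => x s ^ 2), Fintype.sum_sum_type]
    calc (D.card : ℝ) = ∑ _i : D, (1 : ℝ) := by simp
      _ ≤ ∑ i, ξ i ^ 2 := Finset.sum_le_sum fun i _ => one_le_sq_iff_one_le_abs _ |>.mpr (hξ i)
      _ ≤ _ := le_add_of_nonneg_right (Finset.sum_nonneg fun i _ => sq_nonneg _)
  rw [← hBT, dotProduct_mulVec_schurComplement _ B (hΩ.submatrix Subtype.val_injective),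
    ← hblocks, submatrix_mulVec_equiv, ← comp_equiv_symm_dotProduct]
  calc (D.card : ℝ) * lambdaStar Ω (D.card + F.card)
      ≤ lambdaStar Ω (D ∪ F).card * ∑ i, (x ∘ e.symm) i ^ 2 := by
        rw [mul_comm, Finset.card_union_of_disjoint hDF]
        exact mul_le_mul_of_nonneg_left hnorm (lambdaStar_nonneg hΩ.posSemidef _)
    _ ≤ _ := lambdaStar_mul_sum_sq_le hΩ.posSemidef _ _

lemma one_le_lambdaStar_one [Nonempty (Fin p)] (hdiag : ∀ i, Ω i i = 1) :
    1 ≤ lambdaStar Ω 1 := by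
  have hquad (b : Fin p) (ξ : ({b} : Finset (Fin p)) → ℝ) :
      ξ ⬝ᵥ (Ω.submatrix (↑) (↑) *ᵥ ξ) = ∑ i, ξ i ^ 2 := by
    simp [dotProduct, mulVec, hdiag, sq]
  inhabit Fin p
  refine le_csInf ⟨_, {default}, Finset.card_singleton _, fun _ => 1, by simp, rfl⟩ ?_
  rintro _ ⟨S, hS, ξ, hξ, rfl⟩
  obtain ⟨b, rfl⟩ := Finset.card_eq_one.mp hS
  rw [hquad, hξ]

lemma le_rhoDF_of_card_eq_two_mul (hΩ : Ω.PosDef) (hD : D.Nonempty) (hDF : Disjoint D F)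
    (hϑ : 0 < ϑ) (hT : 0 < T) (hN : (T + 1 / T) / 2 < 2 * (N : ℝ) + 1)
    (heven : ∀ k j : ℕ, 2 ≤ k → k ≤ 2 * N →
      (k : ℝ) / 2 ≤ (j : ℝ) → j + 1 ≤ k → j ≤ N →
      ((T + 1 / T) / 2 + 1 - 2 * (j : ℝ)) / (((k : ℝ) - (j : ℝ)) * T) ≤ lambdaStar Ω k)
    {m : ℕ} (hm : D.card = 2 * m) :
    ((T + 1 / T) / 2 + 1) * ϑ / 2 ≤ rhoDF Ω ϑ (T * ϑ) D F := by
  set M := (T + 1 / T) / 2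
  have hm0 : 0 < m := by have := hD.card_pos; omega
  have hd : (D.card : ℝ) = 2 * m := by exact_mod_cast hm
  have hω := card_mul_lambdaStar_le_omegaDF hΩ hDF
  have hlam0 := lambdaStar_nonneg hΩ.posSemidef (D.card + F.card)
  have hω0 : 0 ≤ omegaDF Ω D F := (mul_nonneg (Nat.cast_nonneg _) hlam0).trans hω
  rw [rhoDF, if_pos (hm ▸ even_two_mul m)]
  by_cases hn : M + 1 ≤ D.card + 2 * F.card
  · nlinarith [mul_nonneg hω0 (mul_pos hT hϑ).le, mul_le_mul_of_nonneg_right hn hϑ.le]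
  have hj : m + F.card ≤ N := by
    by_contra! h
    have : (N : ℝ) + 1 ≤ m + F.card := by exact_mod_cast h
    linarith
  have hlam : M + 1 - 2 * (m + F.card) ≤ lambdaStar Ω (D.card + F.card) * (m * T) := by
    have h := heven (2 * m + F.card) (m + F.card) (by omega) (by omega)
      (by push_cast; linarith) (by omega) hj
    have hkj : ((2 * m + F.card : ℕ) : ℝ) - ((m + F.card : ℕ) : ℝ) = m := by push_cast; ring
    rw [hkj, div_le_iff₀ (by positivity), ← hm] at h
    exact_mod_cast h
  rw [hd] at hω
  have hωT : 2 * (M + 1 - (D.card + 2 * F.card)) ≤ omegaDF Ω D F * T := by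
    nlinarith [mul_le_mul_of_nonneg_right hω hT.le]
  nlinarith [mul_le_mul_of_nonneg_right hωT hϑ.le]

lemma add_sqrt_le_omegaDF_mul (hΩ : Ω.PosDef) (hdiag : ∀ i, Ω i i = 1) (hDF : Disjoint D F)
    (hT : 1 ≤ T) (hN : (T + 1 / T) / 2 < 2 * (N : ℝ) + 1)
    (hodd : ∀ k j : ℕ, 2 ≤ k → k + 1 ≤ 2 * N →
      ((k : ℝ) + 1) / 2 ≤ (j : ℝ) → j ≤ k → j ≤ N →
      ((T + 1 / T) / 2 - 2 * (j : ℝ) + 2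
          + Real.sqrt (((T + 1 / T) / 2 - 2 * (j : ℝ) + 2) ^ 2 - 1))
        / ((2 * (k : ℝ) - 2 * (j : ℝ) + 1) * T) ≤ lambdaStar Ω k)
    {m : ℕ} (hm : D.card = 2 * m + 1) (hn : (D.card : ℝ) + 2 * F.card < (T + 1 / T) / 2)
    {c : ℝ} (hc : c = (T + 1 / T) / 2 - (D.card + 2 * F.card) + 1) :
    c + √(c ^ 2 - 1) ≤ omegaDF Ω D F * T := by
  have hd : (D.card : ℝ) = 2 * m + 1 := by exact_mod_cast hm
  have hT0 : 0 < T := by linarith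
  have hω := card_mul_lambdaStar_le_omegaDF hΩ hDF
  rcases Nat.eq_zero_or_pos (m + F.card) with hmF | hmF
  · -- `D` is a singleton and `F` is empty: the bound is `λ₁* ≥ 1`, and `c + √(c² - 1) = T`
    obtain ⟨hm0, hF0⟩ : m = 0 ∧ F.card = 0 := by omega
    obtain ⟨a, -⟩ := Finset.card_pos.mp (show 0 < D.card by omega)
    have : Nonempty (Fin p) := ⟨a⟩
    rw [hm, hF0, hm0] at hω
    have hω1 : 1 ≤ omegaDF Ω D F := (one_le_lambdaStar_one hdiag).trans (by simpa using hω)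
    have hcT : c = (T + 1 / T) / 2 := by rw [hc, hd, hm0, hF0]; push_cast; ring
    have hsqrt : √(c ^ 2 - 1) = (T - 1 / T) / 2 := by
      have h1T : 1 / T ≤ T := (div_le_one hT0).mpr hT |>.trans hT
      have hsq : ((T + 1 / T) / 2) ^ 2 - 1 = ((T - 1 / T) / 2) ^ 2 := by field_simp; ring
      rw [hcT, hsq, Real.sqrt_sq (by linarith)]
    rw [hsqrt, hcT]
    nlinarith
  have hj : m + 1 + F.card ≤ N := by
    by_contra! h
    have : (N : ℝ) ≤ m + F.card := by exact_mod_cast (by omega : N ≤ m + F.card)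
    linarith
  have h := hodd (2 * m + 1 + F.card) (m + 1 + F.card) (by omega) (by omega)
    (by push_cast; linarith) (by omega) hj
  have hcj : (T + 1 / T) / 2 - 2 * ((m + 1 + F.card : ℕ) : ℝ) + 2 = c := by
    rw [hc, hd]; push_cast; ring
  have hkj : 2 * ((2 * m + 1 + F.card : ℕ) : ℝ) - 2 * ((m + 1 + F.card : ℕ) : ℝ) + 1 = D.card := by
    rw [hd]; push_cast; ring
  rw [hcj, hkj, div_le_iff₀ (by rw [hd]; positivity), ← hm] at h
  nlinarith [mul_le_mul_of_nonneg_right hω hT0.le]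

lemma le_rhoDF_of_card_eq_two_mul_add_one (hΩ : Ω.PosDef) (hdiag : ∀ i, Ω i i = 1)
    (hDF : Disjoint D F) (hϑ : 0 < ϑ) (hT : 1 ≤ T) (hN : (T + 1 / T) / 2 < 2 * (N : ℝ) + 1)
    (hodd : ∀ k j : ℕ, 2 ≤ k → k + 1 ≤ 2 * N →
      ((k : ℝ) + 1) / 2 ≤ (j : ℝ) → j ≤ k → j ≤ N →
      ((T + 1 / T) / 2 - 2 * (j : ℝ) + 2
          + Real.sqrt (((T + 1 / T) / 2 - 2 * (j : ℝ) + 2) ^ 2 - 1))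
        / ((2 * (k : ℝ) - 2 * (j : ℝ) + 1) * T) ≤ lambdaStar Ω k)
    {m : ℕ} (hm : D.card = 2 * m + 1) :
    ((T + 1 / T) / 2 + 1) * ϑ / 2 ≤ rhoDF Ω ϑ (T * ϑ) D F := by
  rw [rhoDF, if_neg (by rw [hm]; exact Nat.not_even_two_mul_add_one m)]
  by_cases hn : (T + 1 / T) / 2 ≤ D.card + 2 * F.card
  · nlinarith [sq_nonneg (max (√(omegaDF Ω D F * (T * ϑ)) - ϑ / √(omegaDF Ω D F * (T * ϑ))) 0),
      mul_le_mul_of_nonneg_right hn hϑ.le]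
  rw [not_le] at hn
  set c := (T + 1 / T) / 2 - (D.card + 2 * F.card) + 1 with hc
  have hω := add_sqrt_le_omegaDF_mul hΩ hdiag hDF hT hN hodd hm hn hc
  have hgain := two_mul_sub_one_mul_le_sq_max_sqrt_sub hϑ (c := c) (by rw [hc]; linarith)
    (x := omegaDF Ω D F * (T * ϑ)) (by rw [← mul_assoc]; exact mul_le_mul_of_nonneg_right hω hϑ.le)
  rw [hc] at hgain
  linarith

end LambdaStar

theorem rho_lower_bound_cor_main_general
    (p : ℕ) (Ω : Matrix (Fin p) (Fin p) ℝ) (hpd : Ω.PosDef)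
    (hdiag : ∀ i, Ω i i = 1)
    (ϑ r T : ℝ) (h0 : 0 < ϑ) (h1 : ϑ < r) (hT : T = r / ϑ)
    (N : ℕ)
    (hN2 : (T + 1 / T) / 2 < 2 * (N : ℝ) + 1)
    (hodd : ∀ k j : ℕ, 2 ≤ k → k + 1 ≤ 2 * N →
      ((k : ℝ) + 1) / 2 ≤ (j : ℝ) → j ≤ k → j ≤ N →
      ((T + 1 / T) / 2 - 2 * (j : ℝ) + 2
          + Real.sqrt (((T + 1 / T) / 2 - 2 * (j : ℝ) + 2) ^ 2 - 1))
        / ((2 * (k : ℝ) - 2 * (j : ℝ) + 1) * T) ≤ lambdaStar Ω k)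
    (heven : ∀ k j : ℕ, 2 ≤ k → k ≤ 2 * N →
      (k : ℝ) / 2 ≤ (j : ℝ) → j + 1 ≤ k → j ≤ N →
      ((T + 1 / T) / 2 + 1 - 2 * (j : ℝ)) / (((k : ℝ) - (j : ℝ)) * T) ≤ lambdaStar Ω k)
    (D F : Finset (Fin p)) (hD : D.Nonempty) (hDF : Disjoint D F) :
    (ϑ + r) ^ 2 / (4 * r) ≤ rhoDF Ω ϑ r D F := by
  have hT1 : 1 ≤ T := by rw [hT, le_div_iff₀ h0]; linarith
  have hr : r = T * ϑ := by rw [hT]; field_simp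
  have htarget : (ϑ + r) ^ 2 / (4 * r) = ((T + 1 / T) / 2 + 1) * ϑ / 2 := by
    rw [hr]; field_simp; ring
  rw [htarget, hr]
  obtain ⟨m, hm | hm⟩ := Nat.even_or_odd' D.card
  · exact le_rhoDF_of_card_eq_two_mul hpd hD hDF h0 (by linarith) hN2 heven hm
  · exact le_rhoDF_of_card_eq_two_mul_add_one hpd hdiag hDF h0 hT1 hN2 hodd hm

/-- Let `0 < ϑ < r`, `T = r/ϑ`, and let `N ≥ 1` be the unique integer
with `2N − 1 ≤ (T + 1/T)/2 < 2N + 1`. Suppose `Ω` is a `p×p` real symmetric positive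
definite matrix with unit diagonal satisfying, for every `2 ≤ k ≤ 2N − 1` and every
integer `j` with `(k+1)/2 ≤ j ≤ min(k, N)`,
`λ_k*(Ω) ≥ ((T+1/T)/2 − 2j + 2 + √(((T+1/T)/2 − 2j + 2)² − 1)) / ((2k − 2j + 1)T)`,
and for every `2 ≤ k ≤ 2N` and every integer `j` with `k/2 ≤ j ≤ min(k−1, N)`,
`λ_k*(Ω) ≥ ((T+1/T)/2 + 1 − 2j) / ((k − j)T)`.
Then for every pair of disjoint subsets `D, F` with `D` nonempty,
`ρ(D,F;Ω) ≥ (ϑ + r)²/(4r)`. -/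
theorem rho_lower_bound_cor_main
    (p : ℕ) (Ω : Matrix (Fin p) (Fin p) ℝ) (hsymm : Ω.IsSymm) (hpd : Ω.PosDef)
    (hdiag : ∀ i, Ω i i = 1)
    (ϑ r T : ℝ) (h0 : 0 < ϑ) (h1 : ϑ < r) (hT : T = r / ϑ)
    (N : ℕ) (hN : 1 ≤ N)
    (hN1 : 2 * (N : ℝ) - 1 ≤ (T + 1 / T) / 2)
    (hN2 : (T + 1 / T) / 2 < 2 * (N : ℝ) + 1)
    (hodd : ∀ k j : ℕ, 2 ≤ k → k + 1 ≤ 2 * N →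
      ((k : ℝ) + 1) / 2 ≤ (j : ℝ) → j ≤ k → j ≤ N →
      ((T + 1 / T) / 2 - 2 * (j : ℝ) + 2
          + Real.sqrt (((T + 1 / T) / 2 - 2 * (j : ℝ) + 2) ^ 2 - 1))
        / ((2 * (k : ℝ) - 2 * (j : ℝ) + 1) * T) ≤ lambdaStar Ω k)
    (heven : ∀ k j : ℕ, 2 ≤ k → k ≤ 2 * N →
      (k : ℝ) / 2 ≤ (j : ℝ) → j + 1 ≤ k → j ≤ N →
      ((T + 1 / T) / 2 + 1 - 2 * (j : ℝ)) / (((k : ℝ) - (j : ℝ)) * T) ≤ lambdaStar Ω k)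
    (D F : Finset (Fin p)) (hD : D.Nonempty) (hDF : Disjoint D F) :
    (ϑ + r) ^ 2 / (4 * r) ≤ rhoDF Ω ϑ r D F :=
  rho_lower_bound_cor_main_general p Ω hpd hdiag ϑ r T h0 h1 hT N hN2 hodd heven D F hD hDF
end

section
/- Let k ≥ 1 be an integer, let Z = (Z₁,…,Z_k) be a random vector whose coordinates are independent standard normal random variables, and let μ ∈ ℝ^k. Then for every real s, P(‖μ + Z‖ ≤ s) ≤ Φ(s − ‖μ‖), where ‖·‖ is the Euclidean norm on ℝ^k and Φ is the cumulative distribution function of the standard normal distribution. -/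
/-!
Pick a unit vector `u` with `⟪u, μ⟫ = ‖μ‖`. By Cauchy–Schwarz, `‖μ + z‖ ≤ s` forces
`⟪u, z⟫ ≤ s - ‖μ‖`, and under the standard Gaussian measure `z ↦ ⟪u, z⟫` is a standard normal
variable.
-/

open MeasureTheory ProbabilityTheory
open scoped RealInnerProductSpace

section

variable {E : Type*} [NormedAddCommGroup E] [InnerProductSpace ℝ E]

lemma exists_norm_eq_one_inner_eq_norm [Nontrivial E] (μ : E) :
    ∃ u : E, ‖u‖ = 1 ∧ ⟪u, μ⟫ = ‖μ‖ := by
  rcases eq_or_ne μ 0 with rfl | hμ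
  · obtain ⟨u, hu⟩ := exists_norm_eq E zero_le_one
    exact ⟨u, hu, by simp⟩
  · have hμ' : ‖μ‖ ≠ 0 := norm_ne_zero_iff.2 hμ
    refine ⟨‖μ‖⁻¹ • μ, by rw [norm_smul, norm_inv, norm_norm, inv_mul_cancel₀ hμ'], ?_⟩
    rw [real_inner_smul_left, real_inner_self_eq_norm_sq, sq, ← mul_assoc, inv_mul_cancel₀ hμ',
      one_mul]

lemma inner_le_sub_norm_of_norm_add_le {u μ z : E} {s : ℝ} (hu : ‖u‖ = 1) (huμ : ⟪u, μ⟫ = ‖μ‖)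
    (hz : ‖μ + z‖ ≤ s) : ⟪u, z⟫ ≤ s - ‖μ‖ := by
  have := real_inner_le_norm u (μ + z)
  rw [inner_add_right, huμ, hu, one_mul] at this
  linarith

variable [FiniteDimensional ℝ E] [MeasurableSpace E] [BorelSpace E]

lemma stdGaussian_map_innerSL (u : E) :
    (stdGaussian E).map (innerSL ℝ u) = gaussianReal 0 (‖u‖₊ ^ 2) := by
  rw [IsGaussian.map_eq_gaussianReal, integral_strongDual_stdGaussian, variance_dual_stdGaussian,
    innerSL_apply_norm]
  congr
  ext; simp

theorem stdGaussian_norm_add_le_le_gaussianReal [Nontrivial E] (μ : E) (s : ℝ) :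
    stdGaussian E {z | ‖μ + z‖ ≤ s} ≤ gaussianReal 0 1 (Set.Iic (s - ‖μ‖)) := by
  obtain ⟨u, hu, huμ⟩ := exists_norm_eq_one_inner_eq_norm μ
  have hu' : ‖u‖₊ = 1 := NNReal.eq hu
  calc stdGaussian E {z | ‖μ + z‖ ≤ s}
      ≤ stdGaussian E (innerSL ℝ u ⁻¹' Set.Iic (s - ‖μ‖)) :=
        measure_mono fun z hz => inner_le_sub_norm_of_norm_add_le hu huμ hz
    _ = gaussianReal 0 1 (Set.Iic (s - ‖μ‖)) := by
        rw [← Measure.map_apply (by fun_prop) measurableSet_Iic, stdGaussian_map_innerSL, hu',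
          one_pow]

end

/-- Let `k ≥ 1`, let `Z = (Z₁,…,Z_k)` have independent standard normal
coordinates, and let `μ ∈ ℝ^k`. Then for every real `s`,
`P(‖μ + Z‖ ≤ s) ≤ Φ(s − ‖μ‖)`, where `Φ` is the standard normal CDF. -/
theorem noncentral_chisq_lower_tail_bound
    (k : ℕ) (hk : 1 ≤ k) (μ : Fin k → ℝ) (s : ℝ) :
    (Measure.pi fun _ : Fin k => gaussianReal 0 1)
        {z : Fin k → ℝ | Real.sqrt (∑ i, (μ i + z i) ^ 2) ≤ s}
      ≤ gaussianReal 0 1 (Set.Iic (s - Real.sqrt (∑ i, μ i ^ 2))) := by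
  have : NeZero k := ⟨by omega⟩ -- makes `EuclideanSpace ℝ (Fin k)` nontrivial
  have hset : {z : Fin k → ℝ | Real.sqrt (∑ i, (μ i + z i) ^ 2) ≤ s}
      = WithLp.toLp 2 ⁻¹' {x : EuclideanSpace ℝ (Fin k) | ‖WithLp.toLp 2 μ + x‖ ≤ s} := by
    ext z; simp [EuclideanSpace.norm_eq]
  have hnorm : Real.sqrt (∑ i, μ i ^ 2) = ‖WithLp.toLp 2 μ‖ := by simp [EuclideanSpace.norm_eq]
  rw [hset, hnorm, ← Measure.map_apply (by fun_prop) (measurableSet_le (by fun_prop) (by fun_prop)),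
    map_pi_eq_stdGaussian]
  exact stdGaussian_norm_add_le_le_gaussianReal _ s
end

section
/- Let X be a real n×p matrix such that every collection of at most n columns of X is linearly independent. Suppose β₀, β ∈ ℝ^p satisfy Xβ = Xβ₀ and β ≠ β₀, and the support of β₀ has exactly k elements. Then the support of β has at least n − k + 1 elements. -/
open Matrix

/-- Let `X` be a real `n×p` matrix such that every collection of at most
`n` columns of `X` is linearly independent. If `β₀, β ∈ ℝ^p` satisfy `Xβ = Xβ₀`, `β ≠ β₀`,
and the support of `β₀` has exactly `k` elements, then the support of `β` has at least
`n − k + 1` elements. -/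
theorem sparse_solution_uniqueness
    (n p : ℕ) (X : Matrix (Fin n) (Fin p) ℝ)
    (hX : ∀ S : Finset (Fin p), S.card ≤ n →
      LinearIndependent ℝ (fun j : ↥S => X.transpose (j : Fin p)))
    (β₀ β : Fin p → ℝ) (hEq : X *ᵥ β = X *ᵥ β₀) (hne : β ≠ β₀) (k : ℕ)
    (hk : {j : Fin p | β₀ j ≠ 0}.ncard = k) :
    (n : ℤ) - k + 1 ≤ ({j : Fin p | β j ≠ 0}.ncard : ℤ) := by
  set d : Fin p → ℝ := β - β₀ with hd
  have hdne : d ≠ 0 := sub_ne_zero.mpr hne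
  have hXd : X *ᵥ d = 0 := by
    simp [hd, mulVec_sub, hEq, sub_self]
  set S : Finset (Fin p) := Finset.univ.filter (fun j => d j ≠ 0) with hS
  have hScard : n + 1 ≤ S.card := by
    by_contra h
    push_neg at h
    have hle : S.card ≤ n := by omega
    have hli := hX S hle
    rw [Fintype.linearIndependent_iff] at hli
    have hsum : ∑ j : ↥S, d (j : Fin p) • X.transpose (j : Fin p) = 0 := by
      rw [Finset.sum_coe_sort S (fun j => d j • X.transpose j)]
      have hext : ∑ j ∈ S, d j • X.transpose j = ∑ j : Fin p, d j • X.transpose j := by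
        apply Finset.sum_subset (Finset.subset_univ S)
        intro j _ hj
        simp only [hS, Finset.mem_filter, Finset.mem_univ, true_and, not_not] at hj
        simp [hj]
      rw [hext]
      funext i
      have h := congrFun hXd i
      simpa [mulVec, dotProduct, Finset.sum_apply, mul_comm] using h
    obtain ⟨j, hj⟩ := Function.ne_iff.mp hdne
    have hjS : j ∈ S := by simp [hS]; exact hj
    exact hj (hli (fun j => d (j : Fin p)) hsum ⟨j, hjS⟩)
  have hsub : S ⊆ (Finset.univ.filter fun j => β j ≠ 0) ∪
      (Finset.univ.filter fun j => β₀ j ≠ 0) := by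
    intro j hj
    simp only [hS, Finset.mem_filter, Finset.mem_univ, true_and] at hj
    simp only [Finset.mem_union, Finset.mem_filter, Finset.mem_univ, true_and]
    by_contra hc
    push_neg at hc
    exact hj (by simp [hd, hc.1, hc.2])
  have h1 : S.card ≤ (Finset.univ.filter fun j => β j ≠ 0).card +
      (Finset.univ.filter fun j => β₀ j ≠ 0).card :=
    le_trans (Finset.card_le_card hsub) (Finset.card_union_le _ _)
  have h2 : {j : Fin p | β j ≠ 0}.ncard = (Finset.univ.filter fun j => β j ≠ 0).card := by
    rw [Set.ncard_eq_toFinset_card']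
    congr 1
    ext j; simp
  have h3 : {j : Fin p | β₀ j ≠ 0}.ncard = (Finset.univ.filter fun j => β₀ j ≠ 0).card := by
    rw [Set.ncard_eq_toFinset_card']
    congr 1
    ext j; simp
  omega
end

section
/- Let ϑ > 0, w > 0, and let d ≥ 1 be an integer with w/ϑ ≥ d + √(d² − 1). Set E = (ϑ + w)²/(4w) − (d+1)ϑ/2. Then E ≥ 0 and E ≤ w, and if q = (√w − √E)², then for every integer f ≥ 0: (d + f)ϑ + (√w − √q)² = (d + 2f + 1)ϑ/2 + (1/4)(√w − ϑ/√w)². -/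
/-- Let `ϑ > 0`, `w > 0`, and let `d ≥ 1` be an integer with
`w/ϑ ≥ d + √(d² − 1)`. Set `E = (ϑ + w)²/(4w) − (d+1)ϑ/2`. Then `0 ≤ E ≤ w`, and with
`q = (√w − √E)²`, for every integer `f ≥ 0`:
`(d + f)ϑ + (√w − √q)² = (d + 2f + 1)ϑ/2 + (1/4)(√w − ϑ/√w)²`. -/
theorem screening_threshold_identity_odd_case
    (ϑ w : ℝ) (d : ℕ) (hϑ : 0 < ϑ) (hw : 0 < w) (hd : 1 ≤ d)
    (hcond : (d : ℝ) + Real.sqrt ((d : ℝ) ^ 2 - 1) ≤ w / ϑ) :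
    0 ≤ (ϑ + w) ^ 2 / (4 * w) - ((d : ℝ) + 1) * ϑ / 2 ∧
    (ϑ + w) ^ 2 / (4 * w) - ((d : ℝ) + 1) * ϑ / 2 ≤ w ∧
    ∀ f : ℕ,
      ((d : ℝ) + f) * ϑ +
        (Real.sqrt w - Real.sqrt ((Real.sqrt w -
          Real.sqrt ((ϑ + w) ^ 2 / (4 * w) - ((d : ℝ) + 1) * ϑ / 2)) ^ 2)) ^ 2
      = ((d : ℝ) + 2 * f + 1) * ϑ / 2 + (Real.sqrt w - ϑ / Real.sqrt w) ^ 2 / 4 := by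
  have hd1 : (1 : ℝ) ≤ (d : ℝ) := by exact_mod_cast hd
  have hdsq : (0 : ℝ) ≤ (d : ℝ) ^ 2 - 1 := by nlinarith
  have hs : Real.sqrt ((d : ℝ) ^ 2 - 1) ^ 2 = (d : ℝ) ^ 2 - 1 := Real.sq_sqrt hdsq
  have hsn : 0 ≤ Real.sqrt ((d : ℝ) ^ 2 - 1) := Real.sqrt_nonneg _
  have hcond' : ϑ * ((d : ℝ) + Real.sqrt ((d : ℝ) ^ 2 - 1)) ≤ w :=
    (le_div_iff₀' hϑ).mp hcond
  have hwϑ : ϑ ≤ w := by nlinarith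
  have ha : 0 ≤ w - (d : ℝ) * ϑ - ϑ * Real.sqrt ((d : ℝ) ^ 2 - 1) := by nlinarith
  have hb : 0 ≤ w - (d : ℝ) * ϑ + ϑ * Real.sqrt ((d : ℝ) ^ 2 - 1) := by nlinarith
  have key : 0 ≤ ϑ ^ 2 - 2 * (d : ℝ) * ϑ * w + w ^ 2 := by
    nlinarith [mul_nonneg ha hb, hs, sq_nonneg ϑ]
  have hE0 : 0 ≤ (ϑ + w) ^ 2 / (4 * w) - ((d : ℝ) + 1) * ϑ / 2 := by
    rw [sub_nonneg, le_div_iff₀ (by linarith)]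
    nlinarith [key]
  have hEw : (ϑ + w) ^ 2 / (4 * w) - ((d : ℝ) + 1) * ϑ / 2 ≤ w := by
    rw [sub_le_iff_le_add, div_le_iff₀ (by linarith)]
    nlinarith [mul_le_mul hwϑ hwϑ hϑ.le hw.le, mul_nonneg (mul_nonneg (by positivity : (0:ℝ) ≤ (d:ℝ)) hϑ.le) hw.le]
  refine ⟨hE0, hEw, fun f => ?_⟩
  set E := (ϑ + w) ^ 2 / (4 * w) - ((d : ℝ) + 1) * ϑ / 2 with hE
  have hle : Real.sqrt E ≤ Real.sqrt w := Real.sqrt_le_sqrt hEw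
  have h1 : Real.sqrt ((Real.sqrt w - Real.sqrt E) ^ 2) = Real.sqrt w - Real.sqrt E :=
    Real.sqrt_sq (by linarith)
  rw [h1]
  have h2 : Real.sqrt w - (Real.sqrt w - Real.sqrt E) = Real.sqrt E := by ring
  rw [h2, Real.sq_sqrt hE0]
  have hws : Real.sqrt w ^ 2 = w := Real.sq_sqrt hw.le
  have hwsn : Real.sqrt w ≠ 0 := by positivity
  have h3 : (Real.sqrt w - ϑ / Real.sqrt w) ^ 2 = w - 2 * ϑ + ϑ ^ 2 / w := by
    rw [sub_sq, hws, div_pow, hws]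
    have h5 : 2 * Real.sqrt w * (ϑ / Real.sqrt w) = 2 * ϑ := by
      field_simp
    rw [h5]
  rw [h3, hE]
  field_simp
  ring
end
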